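/- arXiv:2403.11654 — 3 statements merged into one kernel-verified Lean document; each statement's English description precedes it below -/
import Mathlib

section
/- Let φ : X → ℝ be continuous and δ > 0. Let 𝔫 ⊆ ℕ be an infinite set and let (ξ_n)_{n∈𝔫} be Borel probability measures on X. For integers M ≥ 1 and n ∈ 𝔫 set ζ_n^M := ∫ μ_x^n[ℕ \ E^δ_{Φ_x}(M)] dξ_n(x). Assume that for every M ≥ 1 the measures ζ_n^M converge in the weak-* topology, as 𝔫 ∋ n → ∞, to a finite Borel measure ζ^M. Then the sequence (ζ^M)_{M≥1} is setwise nonincreasing, and its setwise limit ζ := lim_{M→∞} ζ^M satisfies ∫ φ dζ ≤ ζ(X)·δ. -/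
open MeasureTheory Filter Topology
open scoped ENNReal

noncomputable section

namespace SRB

/-- `d_n(E) = #(E ∩ [1,n]) / n`. -/
def densN (E : Set ℕ) (n : ℕ) : ℝ := (Nat.card ↥(E ∩ Set.Icc 1 n) : ℝ) / n

/-- upper asymptotic density -/
def upperDens (E : Set ℕ) : ℝ := Filter.atTop.limsup fun n => densN E n

/-- lower asymptotic density -/
def lowerDens (E : Set ℕ) : ℝ := Filter.atTop.liminf fun n => densN E n

/-- `E(M) = {k | k + m ∈ E for some 1 ≤ m ≤ M}`. -/
def EM (E : Set ℕ) (M : ℕ) : Set ℕ := {k | ∃ m, 1 ≤ m ∧ m ≤ M ∧ k + m ∈ E}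

/-- the set of `δ`-hyperbolic times of the sequence `a`. -/
def Ehyp (a : ℕ → ℝ) (δ : ℝ) : Set ℕ :=
  {p | 1 ≤ p ∧ ∀ k < p, ((p : ℝ) - k) * δ ≤ ∑ l ∈ Finset.Ico k p, a l}

/-- the set of `(δ,M)`-weakly hyperbolic times of the sequence `a`. -/
def Fweak (a : ℕ → ℝ) (δ : ℝ) (M : ℕ) : Set ℕ :=
  {p | 1 ≤ p ∧ ∀ k, p - M ≤ k → k < p → ((p : ℝ) - k) * δ ≤ ∑ l ∈ Finset.Ico k p, a l}

/-- the connected component (maximal interval of integers) of `p` in `S`. -/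
def component (S : Set ℕ) (p : ℕ) : Set ℕ :=
  {q | q ∈ S ∧ ∀ r, min p q ≤ r → r ≤ max p q → r ∈ S}

/-- the set of `(δ,M)`-mildly hyperbolic times of the sequence `a`. -/
def Gmild (a : ℕ → ℝ) (δ : ℝ) (M : ℕ) : Set ℕ :=
  {p | p ∈ EM (Fweak a δ M) M ∧
    ∀ k ∈ component (EM (Fweak a δ M) M) p, k < p →
      ((p : ℝ) - k) * (δ / 2) ≤ ∑ l ∈ Finset.Ico k p, a l}

variable {X : Type*} [MetricSpace X] [CompactSpace X] [MeasurableSpace X] [BorelSpace X]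

/-- the sequence `Φ_x = (φ(Tⁿ x))ₙ`. -/
def Phi (T : X ≃ₜ X) (φ : X → ℝ) (x : X) : ℕ → ℝ := fun n => φ ((⇑T)^[n] x)

/-- the Birkhoff sum `φ_n(x)`. -/
def birk (T : X ≃ₜ X) (φ : X → ℝ) (x : X) (n : ℕ) : ℝ := ∑ k ∈ Finset.range n, φ ((⇑T)^[k] x)

/-- `φ̄_*(x) = limsup_n φ_n(x)/n`. -/
def phiStar (T : X ≃ₜ X) (φ : X → ℝ) (x : X) : ℝ :=
  Filter.atTop.limsup fun n => birk T φ x n / n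

/-- the empirical measure `μ_x^n`. -/
def emp (T : X ≃ₜ X) (x : X) (n : ℕ) : Measure X :=
  (n : ℝ≥0∞)⁻¹ • ∑ k ∈ Finset.range n, Measure.dirac ((⇑T)^[k] x)

open scoped Classical in
/-- the empirical measure on a set of times, `μ_x^n[E]`. -/
def empOn (T : X ≃ₜ X) (x : X) (n : ℕ) (E : Set ℕ) : Measure X :=
  (n : ℝ≥0∞)⁻¹ • ∑ k ∈ Finset.range n, if k ∈ E then Measure.dirac ((⇑T)^[k] x) else 0

/-- weak-* convergence of a family of finite measures along a filter. -/
def WeakLim (L : Filter ℕ) (μs : ℕ → Measure X) (μ : Measure X) : Prop :=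
  ∀ f : C(X, ℝ), Tendsto (fun n => ∫ y, f y ∂(μs n)) L (𝓝 (∫ y, f y ∂μ))

/-- `pw(x)`: the set of weak-* limit points of the empirical measures `(μ_x^n)_{n ≥ 1}`. -/
def pw (T : X ≃ₜ X) (x : X) : Set (Measure X) :=
  {μ | IsProbabilityMeasure μ ∧ ∃ s : ℕ → ℕ, StrictMono s ∧ (∀ j, 1 ≤ s j) ∧
    ∀ f : C(X, ℝ), Tendsto (fun j => ∫ y, f y ∂(emp T x (s j))) atTop (𝓝 (∫ y, f y ∂μ))}

/-- `underline-d_φ(x) = lim_{δ→0⁺} lim_{M→∞} d̲(E^δ_{Φ_x}(M))`; both limits being monotone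
they equal the supremum. -/
def lowerDphi (T : X ≃ₜ X) (φ : X → ℝ) (x : X) : ℝ :=
  ⨆ δ : Set.Ioi (0 : ℝ), ⨆ M : ℕ, lowerDens (EM (Ehyp (Phi T φ x) δ.1) M)

/-- `d̄⁺ = lim_{δ→0⁺} limsup_M d̄(F_a^{δ,M}(M))`. -/
def upDplus (a : ℕ → ℝ) : ℝ :=
  ⨆ δ : Set.Ioi (0 : ℝ), Filter.atTop.limsup fun M => upperDens (EM (Fweak a δ.1 M) M)

/-- `d̄⁻ = lim_{δ→0⁺} liminf_M d̄(F_a^{δ,M}(M))`. -/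
def upDminus (a : ℕ → ℝ) : ℝ :=
  ⨆ δ : Set.Ioi (0 : ℝ), Filter.atTop.liminf fun M => upperDens (EM (Fweak a δ.1 M) M)

/-- static entropy of a measure w.r.t. the finite partition given by the fibers of `q`. -/
def Hstat {ι : Type*} [Fintype ι] (μ : Measure X) (q : X → ι) : ℝ :=
  -∑ i : ι, (μ (q ⁻¹' {i})).toReal * Real.log (μ (q ⁻¹' {i})).toReal

/-- the iterated partition `P^F` as a coding map. -/
def codeIter (T : X ≃ₜ X) {ι : Type*} (p : X → ι) (F : Finset ℕ) : X → (F → ι) :=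
  fun x k => p ((⇑T)^[(k : ℕ)] x)

end SRB

namespace SRB

open scoped NNReal

section Auxiliary

variable {X : Type*} [MetricSpace X] [CompactSpace X] [MeasurableSpace X] [BorelSpace X]

open scoped Classical

/- ### new auxiliary material -/

/-- partial sums of `a - δ` -/
def Ssum (a : ℕ → ℝ) (δ : ℝ) (n : ℕ) : ℝ := (∑ l ∈ Finset.range n, a l) - n * δ

/-- running maximum of `Ssum` -/
def Rmax (a : ℕ → ℝ) (δ : ℝ) : ℕ → ℝ
  | 0 => 0
  | (k+1) => max (Rmax a δ k) (Ssum a δ (k+1))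

lemma Ssum_zero (a : ℕ → ℝ) (δ : ℝ) : Ssum a δ 0 = 0 := by simp [Ssum]

lemma Ssum_succ (a : ℕ → ℝ) (δ : ℝ) (k : ℕ) : Ssum a δ (k+1) = Ssum a δ k + (a k - δ) := by
  simp [Ssum, Finset.sum_range_succ]; push_cast; ring

lemma Ssum_le_Rmax (a : ℕ → ℝ) (δ : ℝ) (k : ℕ) : Ssum a δ k ≤ Rmax a δ k := by
  cases k with
  | zero => simp [Rmax, Ssum_zero]
  | succ k => simp [Rmax]

lemma Rmax_mono (a : ℕ → ℝ) (δ : ℝ) : Monotone (Rmax a δ) := by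
  apply monotone_nat_of_le_succ
  intro k; simp [Rmax]

lemma mem_Ehyp_iff (a : ℕ → ℝ) (δ : ℝ) (p : ℕ) :
    p ∈ Ehyp a δ ↔ 1 ≤ p ∧ ∀ k < p, Ssum a δ k ≤ Ssum a δ p := by
  unfold Ehyp
  simp only [Set.mem_setOf_eq]
  refine and_congr_right fun _ => forall₂_congr fun k hk => ?_
  have hsum : ∑ l ∈ Finset.Ico k p, a l = (∑ l ∈ Finset.range p, a l) - ∑ l ∈ Finset.range k, a l :=
    Finset.sum_Ico_eq_sub a hk.le
  have hc : (k : ℝ) ≤ p := by exact_mod_cast hk.le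
  rw [hsum]
  unfold Ssum
  constructor <;> intro h <;> nlinarith

lemma Rmax_eq_of_mem_Ehyp {a : ℕ → ℝ} {δ : ℝ} {p : ℕ} (hp : p ∈ Ehyp a δ) :
    Rmax a δ p = Ssum a δ p := by
  rw [mem_Ehyp_iff] at hp
  obtain ⟨hp1, hp2⟩ := hp
  refine le_antisymm ?_ (Ssum_le_Rmax a δ p)
  have key : ∀ j ≤ p, Rmax a δ j ≤ Ssum a δ p := by
    intro j hj
    induction j with
    | zero => simpa [Rmax, ← Ssum_zero a δ] using hp2 0 hp1
    | succ j ih =>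
      simp only [Rmax, max_le_iff]
      refine ⟨ih (Nat.le_of_succ_le hj), ?_⟩
      rcases eq_or_lt_of_le hj with h | h
      · rw [h]
      · exact hp2 _ h
  exact key p le_rfl

lemma Rmax_succ_eq_of_not_mem {a : ℕ → ℝ} {δ : ℝ} {k : ℕ} (hk : (k+1) ∉ Ehyp a δ) :
    Rmax a δ (k+1) = Rmax a δ k := by
  rw [mem_Ehyp_iff] at hk
  push_neg at hk
  obtain ⟨j, hj, hjs⟩ := hk (by omega)
  have h1 : Ssum a δ (k+1) < Rmax a δ k :=
    lt_of_lt_of_le hjs ((Ssum_le_Rmax a δ j).trans (Rmax_mono a δ (by omega)))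
  simp [Rmax, max_eq_left h1.le]

/-- the telescoping estimate -/
lemma aux_sum (V : ℕ → ℝ) (hV : ∀ k, 0 ≤ V k) (B : ℕ → Prop) [DecidablePred B]
    (hstart : ∀ k, B k → (k = 0 ∨ ¬ B (k-1)) → V k = 0) (n : ℕ) :
    (∑ k ∈ Finset.range n, if B k then V k - V (k+1) else 0)
      ≤ if 0 < n ∧ B (n-1) then -V n else 0 := by
  induction n with
  | zero => simp
  | succ n ih =>
    rw [Finset.sum_range_succ]
    have hb : (if 0 < n ∧ B (n-1) then -V n else 0) ≤ 0 := by
      split_ifs with h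
      · linarith [hV n]
      · exact le_rfl
    by_cases hBn : B n
    · simp only [hBn, if_true, Nat.add_sub_cancel, Nat.succ_pos, true_and]
      by_cases hc : 0 < n ∧ B (n-1)
      · rw [if_pos hc] at ih; linarith
      · rw [if_neg hc] at ih
        have hVn : V n = 0 := by
          apply hstart n hBn
          by_cases h0 : n = 0
          · exact Or.inl h0
          · exact Or.inr (fun hB => hc ⟨Nat.pos_of_ne_zero h0, hB⟩)
        linarith
    · simp only [hBn, if_false, add_zero, Nat.add_sub_cancel, and_false, if_false]
      linarith

/-- KEY combinatorial lemma -/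
lemma key_sum (a : ℕ → ℝ) {δ : ℝ} {M : ℕ} (hM : 1 ≤ M) (n : ℕ) :
    (∑ k ∈ Finset.range n, if k ∈ (EM (Ehyp a δ) M)ᶜ then a k else 0)
      ≤ δ * ∑ k ∈ Finset.range n, if k ∈ (EM (Ehyp a δ) M)ᶜ then (1:ℝ) else 0 := by
  set B : ℕ → Prop := fun k => k ∈ (EM (Ehyp a δ) M)ᶜ with hB
  set V : ℕ → ℝ := fun k => Rmax a δ k - Ssum a δ k with hVdef
  have hV : ∀ k, 0 ≤ V k := fun k => sub_nonneg.mpr (Ssum_le_Rmax a δ k)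
  have hRconst : ∀ k, B k → Rmax a δ (k+1) = Rmax a δ k := by
    intro k hk
    apply Rmax_succ_eq_of_not_mem
    intro hmem
    exact hk ⟨1, le_rfl, hM, hmem⟩
  have hstart : ∀ k, B k → (k = 0 ∨ ¬ B (k-1)) → V k = 0 := by
    intro k hk hor
    by_cases h0 : k = 0
    · subst h0; simp [hVdef, Rmax, Ssum_zero]
    rcases hor with h | hB1
    · exact absurd h h0
    simp only [hB, Set.mem_compl_iff, not_not] at hB1
    obtain ⟨m, hm1, hmM, hmem⟩ := hB1
    by_cases hm : m = 1
    · subst hm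
      have hkk : k - 1 + 1 = k := by omega
      rw [hkk] at hmem
      simp only [hVdef]
      rw [Rmax_eq_of_mem_Ehyp hmem, sub_self]
    · exfalso
      apply hk
      refine ⟨m - 1, by omega, by omega, ?_⟩
      have : k + (m - 1) = k - 1 + m := by omega
      rw [this]
      exact hmem
  have step : ∀ k, B k → a k - δ = V k - V (k+1) := by
    intro k hk
    have h1 := Ssum_succ a δ k
    have h2 := hRconst k hk
    simp only [hVdef]
    linarith
  have main := aux_sum V hV B hstart n
  have hle : (∑ k ∈ Finset.range n, if B k then V k - V (k+1) else 0) ≤ 0 := by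
    refine main.trans ?_
    split_ifs with h
    · linarith [hV n]
    · exact le_rfl
  have heq : (∑ k ∈ Finset.range n, if B k then a k - δ else 0)
      = ∑ k ∈ Finset.range n, if B k then V k - V (k+1) else 0 := by
    refine Finset.sum_congr rfl fun k _ => ?_
    split_ifs with h
    · exact step k h
    · rfl
  have expand : δ * (∑ k ∈ Finset.range n, if B k then (1:ℝ) else 0)
      = ∑ k ∈ Finset.range n, if B k then δ else 0 := by
    rw [Finset.mul_sum]
    refine Finset.sum_congr rfl fun k _ => ?_
    split_ifs <;> simp
  rw [expand, ← sub_nonpos, ← Finset.sum_sub_distrib]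
  have : (∑ k ∈ Finset.range n, ((if B k then a k else 0) - if B k then δ else 0))
      = ∑ k ∈ Finset.range n, if B k then a k - δ else 0 := by
    refine Finset.sum_congr rfl fun k _ => ?_
    split_ifs <;> simp
  rw [this, heq]
  exact hle


section keyE

lemma keyE_ofReal_sum {B : Set ℕ} (h : ℕ → ℝ) (hh : ∀ k, 0 ≤ h k) (n : ℕ) :
    (∑ k ∈ Finset.range n, if k ∈ B then ENNReal.ofReal (h k) else 0)
      = ENNReal.ofReal (∑ k ∈ Finset.range n, if k ∈ B then h k else 0) := by
  rw [ENNReal.ofReal_sum_of_nonneg (fun k _ => by split_ifs with hk; exacts [hh k, le_rfl])]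
  refine Finset.sum_congr rfl fun k _ => ?_
  split_ifs <;> simp

lemma keyE (a : ℕ → ℝ) {δ C : ℝ} (hδ : 0 < δ) (hC : 0 ≤ C) (ha : ∀ k, a k ≤ C)
    {M : ℕ} (hM : 1 ≤ M) (n : ℕ) :
    ENNReal.ofReal C * (∑ k ∈ Finset.range n, if k ∈ (EM (Ehyp a δ) M)ᶜ then (1:ℝ≥0∞) else 0)
      ≤ ∑ k ∈ Finset.range n,
          if k ∈ (EM (Ehyp a δ) M)ᶜ then ENNReal.ofReal (C + δ - a k) else 0 := by
  have h0 : ∀ k, (0:ℝ) ≤ C + δ - a k := fun k => by have := ha k; linarith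
  have h1 : (∑ k ∈ Finset.range n, if k ∈ (EM (Ehyp a δ) M)ᶜ then (1:ℝ≥0∞) else 0)
      = ENNReal.ofReal (∑ k ∈ Finset.range n, if k ∈ (EM (Ehyp a δ) M)ᶜ then (1:ℝ) else 0) := by
    induction n with
    | zero => simp
    | succ n ih =>
      rw [Finset.sum_range_succ, Finset.sum_range_succ, ih,
        ENNReal.ofReal_add (Finset.sum_nonneg fun k _ => by split_ifs <;> norm_num)
          (by split_ifs <;> norm_num)]
      congr 1
      split_ifs <;> simp
  rw [h1, ← ENNReal.ofReal_mul hC]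
  have hkey := key_sum a (δ := δ) hM n
  have hreal : C * (∑ k ∈ Finset.range n, if k ∈ (EM (Ehyp a δ) M)ᶜ then (1:ℝ) else 0)
      ≤ ∑ k ∈ Finset.range n, if k ∈ (EM (Ehyp a δ) M)ᶜ then C + δ - a k else 0 := by
    have hexpand : (∑ k ∈ Finset.range n, if k ∈ (EM (Ehyp a δ) M)ᶜ then C + δ - a k else 0)
        = (C + δ) * (∑ k ∈ Finset.range n, if k ∈ (EM (Ehyp a δ) M)ᶜ then (1:ℝ) else 0)
          - ∑ k ∈ Finset.range n, if k ∈ (EM (Ehyp a δ) M)ᶜ then a k else 0 := by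
      rw [Finset.mul_sum, ← Finset.sum_sub_distrib]
      refine Finset.sum_congr rfl fun k _ => ?_
      split_ifs <;> ring
    rw [hexpand]
    linarith
  have h2 : (∑ k ∈ Finset.range n,
        if k ∈ (EM (Ehyp a δ) M)ᶜ then ENNReal.ofReal (C + δ - a k) else 0)
      = ENNReal.ofReal (∑ k ∈ Finset.range n,
          if k ∈ (EM (Ehyp a δ) M)ᶜ then C + δ - a k else 0) := by
    rw [ENNReal.ofReal_sum_of_nonneg (fun k _ => by split_ifs; exacts [h0 k, le_rfl])]
    exact Finset.sum_congr rfl fun k _ => by split_ifs <;> simp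
  rw [h2]
  exact ENNReal.ofReal_le_ofReal hreal

end keyE

lemma measurableSet_ehyp (T : X ≃ₜ X) {φ : X → ℝ} (hφ : Continuous φ) (δ : ℝ) (p : ℕ) :
    MeasurableSet {x : X | p ∈ Ehyp (Phi T φ x) δ} := by
  have heq : {x : X | p ∈ Ehyp (Phi T φ x) δ}
      = {x : X | 1 ≤ p} ∩ ⋂ k ∈ Set.Iio p,
          {x : X | ((p : ℝ) - k) * δ ≤ ∑ l ∈ Finset.Ico k p, φ ((⇑T)^[l] x)} := by
    ext x
    simp only [Ehyp, Phi, Set.mem_setOf_eq, Set.mem_inter_iff, Set.mem_iInter, Set.mem_Iio]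
  rw [heq]
  refine (MeasurableSet.const _).inter (MeasurableSet.biInter (Set.to_countable _) fun k _ => ?_)
  refine (isClosed_le continuous_const ?_).measurableSet
  exact continuous_finset_sum _ fun l _ => hφ.comp (T.continuous.iterate l)

lemma measurableSet_notEM (T : X ≃ₜ X) {φ : X → ℝ} (hφ : Continuous φ) (δ : ℝ) (M k : ℕ) :
    MeasurableSet {x : X | k ∈ (EM (Ehyp (Phi T φ x) δ) M)ᶜ} := by
  have heq : {x : X | k ∈ EM (Ehyp (Phi T φ x) δ) M}
      = ⋃ m ∈ Set.Icc 1 M, {x : X | (k + m) ∈ Ehyp (Phi T φ x) δ} := by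
    ext x
    simp only [EM, Set.mem_setOf_eq, Set.mem_iUnion, Set.mem_Icc, exists_prop]
    constructor
    · rintro ⟨m, h1, h2, h3⟩; exact ⟨m, ⟨h1, h2⟩, h3⟩
    · rintro ⟨m, ⟨h1, h2⟩, h3⟩; exact ⟨m, h1, h2, h3⟩
  have : MeasurableSet {x : X | k ∈ EM (Ehyp (Phi T φ x) δ) M} := by
    rw [heq]
    exact MeasurableSet.biUnion (Set.to_countable _) fun m _ => measurableSet_ehyp T hφ δ _
  exact this.compl

lemma measurable_kap (T : X ≃ₜ X) {φ : X → ℝ} (hφ : Continuous φ) (δ : ℝ) (M n : ℕ) :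
    Measurable (fun x => empOn T x n ((EM (Ehyp (Phi T φ x) δ) M)ᶜ)) := by
  apply Measure.measurable_of_measurable_coe
  intro s hs
  simp only [empOn, Measure.smul_apply, smul_eq_mul]
  apply Measurable.const_mul
  simp only [Measure.finset_sum_apply]
  have hite : ∀ (c : Prop) [Decidable c] (y : X),
      (if c then Measure.dirac y else 0) s = if c then s.indicator (1 : X → ℝ≥0∞) y else 0 := by
    intro c _ y
    split_ifs with h
    · exact Measure.dirac_apply' _ hs
    · rfl
  simp only [hite]
  apply Finset.measurable_sum
  intro k _
  refine Measurable.ite (measurableSet_notEM T hφ δ M k) ?_ measurable_const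
  exact ((measurable_one.indicator hs).comp (T.continuous.iterate k).measurable)

lemma lintegral_empOn (T : X ≃ₜ X) (x : X) (n : ℕ) (E : Set ℕ) {g : X → ℝ≥0∞}
    (hg : Measurable g) :
    ∫⁻ y, g y ∂(empOn T x n E)
      = (n : ℝ≥0∞)⁻¹ * ∑ k ∈ Finset.range n, (if k ∈ E then g ((⇑T)^[k] x) else 0) := by
  rw [empOn, lintegral_smul_measure, lintegral_finset_sum_measure]
  congr 1
  refine Finset.sum_congr rfl fun k _ => ?_
  split_ifs with h
  · exact lintegral_dirac' _ hg
  · exact lintegral_zero_measure g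

lemma empOn_univ (T : X ≃ₜ X) (x : X) (n : ℕ) (E : Set ℕ) :
    empOn T x n E Set.univ
      = (n : ℝ≥0∞)⁻¹ * ∑ k ∈ Finset.range n, (if k ∈ E then (1:ℝ≥0∞) else 0) := by
  rw [← lintegral_one, lintegral_empOn T x n E measurable_const]

lemma empOn_univ_le_one (T : X ≃ₜ X) (x : X) (n : ℕ) (E : Set ℕ) :
    empOn T x n E Set.univ ≤ 1 := by
  rw [empOn_univ]
  rcases Nat.eq_zero_or_pos n with h | h
  · subst h; simp
  · calc (n : ℝ≥0∞)⁻¹ * ∑ k ∈ Finset.range n, (if k ∈ E then (1:ℝ≥0∞) else 0)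
        ≤ (n : ℝ≥0∞)⁻¹ * ∑ k ∈ Finset.range n, (1:ℝ≥0∞) := by
          gcongr with k hk
          split_ifs <;> simp
      _ = (n : ℝ≥0∞)⁻¹ * n := by simp
      _ = 1 := ENNReal.inv_mul_cancel (by exact_mod_cast h.ne') (ENNReal.natCast_ne_top n)


section PerN

variable (T : X ≃ₜ X) {φ : X → ℝ} (hφ : Continuous φ) {δ : ℝ}

lemma bind_univ_le_one (hφ : Continuous φ) (δ : ℝ) (M n : ℕ)
    (μ : Measure X) [IsProbabilityMeasure μ] :
    (μ.bind fun x => empOn T x n ((EM (Ehyp (Phi T φ x) δ) M)ᶜ)) Set.univ ≤ 1 := by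
  rw [Measure.bind_apply MeasurableSet.univ (measurable_kap T hφ δ M n).aemeasurable]
  calc ∫⁻ x, empOn T x n ((EM (Ehyp (Phi T φ x) δ) M)ᶜ) Set.univ ∂μ
      ≤ ∫⁻ _, 1 ∂μ := lintegral_mono fun x => empOn_univ_le_one T x n _
    _ = 1 := by simp

lemma pern_main (hφ : Continuous φ) {C : ℝ} (hδ : 0 < δ) (hC : 0 ≤ C) (hb : ∀ y, |φ y| ≤ C)
    {M : ℕ} (hM : 1 ≤ M) (n : ℕ) (μ : Measure X) [IsProbabilityMeasure μ] :
    C * ((μ.bind fun x => empOn T x n ((EM (Ehyp (Phi T φ x) δ) M)ᶜ)) Set.univ).toReal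
      ≤ ∫ y, (C + δ - φ y) ∂(μ.bind fun x => empOn T x n ((EM (Ehyp (Phi T φ x) δ) M)ᶜ)) := by
  set ν := μ.bind fun x => empOn T x n ((EM (Ehyp (Phi T φ x) δ) M)ᶜ) with hν
  have hκ := measurable_kap T hφ δ M n
  set g : X → ℝ≥0∞ := fun y => ENNReal.ofReal (C + δ - φ y) with hg
  have hgm : Measurable g := (ENNReal.measurable_ofReal).comp (continuous_const.sub hφ).measurable
  have hf0 : ∀ y, (0:ℝ) ≤ C + δ - φ y := fun y => by
    have := (abs_le.mp (hb y)).2; linarith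
  have hint : ∫ y, (C + δ - φ y) ∂ν = (∫⁻ y, g y ∂ν).toReal :=
    integral_eq_lintegral_of_nonneg_ae (ae_of_all _ hf0)
      (continuous_const.sub hφ).aestronglyMeasurable
  have hbind : ∫⁻ y, g y ∂ν = ∫⁻ x, ∫⁻ y, g y ∂(empOn T x n ((EM (Ehyp (Phi T φ x) δ) M)ᶜ)) ∂μ :=
    Measure.lintegral_bind hκ.aemeasurable hgm.aemeasurable
  have hpoint : ∀ x : X, ENNReal.ofReal C * (empOn T x n ((EM (Ehyp (Phi T φ x) δ) M)ᶜ)) Set.univ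
      ≤ ∫⁻ y, g y ∂(empOn T x n ((EM (Ehyp (Phi T φ x) δ) M)ᶜ)) := by
    intro x
    rw [lintegral_empOn T x n _ hgm, empOn_univ, ← mul_assoc,
      mul_comm (ENNReal.ofReal C) ((n : ℝ≥0∞)⁻¹), mul_assoc]
    gcongr
    have hkey := keyE (Phi T φ x) hδ hC (fun k => (abs_le.mp (hb _)).2) hM n
    refine le_trans (le_of_eq ?_) (hkey.trans (le_of_eq ?_))
    · congr 1
      exact Finset.sum_congr rfl fun k _ => by split_ifs <;> rfl
    · exact Finset.sum_congr rfl fun k _ => by split_ifs <;> rfl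
  have hνuniv : ν Set.univ = ∫⁻ x, (empOn T x n ((EM (Ehyp (Phi T φ x) δ) M)ᶜ)) Set.univ ∂μ :=
    Measure.bind_apply MeasurableSet.univ hκ.aemeasurable
  have hmeasuniv : Measurable fun x => (empOn T x n ((EM (Ehyp (Phi T φ x) δ) M)ᶜ)) Set.univ :=
    (Measure.measurable_coe MeasurableSet.univ).comp hκ
  have hlow : ENNReal.ofReal C * ν Set.univ ≤ ∫⁻ y, g y ∂ν := by
    rw [hbind, hνuniv, ← lintegral_const_mul _ hmeasuniv]
    exact lintegral_mono hpoint
  have hνle1 : ν Set.univ ≤ 1 := bind_univ_le_one T hφ δ M n μ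
  have hfin : ∫⁻ y, g y ∂ν ≠ ⊤ := by
    have hub : ∫⁻ y, g y ∂ν ≤ ENNReal.ofReal (C + δ + C) * ν Set.univ := by
      rw [← lintegral_const]
      refine lintegral_mono fun y => ENNReal.ofReal_le_ofReal ?_
      have := (abs_le.mp (hb y)).1; linarith
    refine ne_top_of_le_ne_top ?_ hub
    exact ENNReal.mul_ne_top ENNReal.ofReal_ne_top (lt_of_le_of_lt hνle1 ENNReal.one_lt_top).ne
  rw [hint]
  calc C * (ν Set.univ).toReal = (ENNReal.ofReal C * ν Set.univ).toReal := by
        rw [ENNReal.toReal_mul, ENNReal.toReal_ofReal hC]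
    _ ≤ (∫⁻ y, g y ∂ν).toReal := ENNReal.toReal_mono hfin hlow

lemma pern_mono (hφ : Continuous φ) (δ : ℝ) {M N : ℕ} (hMN : M ≤ N) (n : ℕ)
    (μ : Measure X) [IsProbabilityMeasure μ] {f : X → ℝ} (hf : Continuous f)
    (hf0 : ∀ y, 0 ≤ f y) {D : ℝ} (hfD : ∀ y, f y ≤ D) :
    ∫ y, f y ∂(μ.bind fun x => empOn T x n ((EM (Ehyp (Phi T φ x) δ) N)ᶜ))
      ≤ ∫ y, f y ∂(μ.bind fun x => empOn T x n ((EM (Ehyp (Phi T φ x) δ) M)ᶜ)) := by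
  set g : X → ℝ≥0∞ := fun y => ENNReal.ofReal (f y) with hg
  have hgm : Measurable g := (ENNReal.measurable_ofReal).comp hf.measurable
  have hsub : ∀ x : X, (EM (Ehyp (Phi T φ x) δ) N)ᶜ ⊆ (EM (Ehyp (Phi T φ x) δ) M)ᶜ := by
    intro x k hk hmem
    obtain ⟨m, h1, h2, h3⟩ := hmem
    exact hk ⟨m, h1, h2.trans hMN, h3⟩
  have hpoint : ∀ x : X, ∫⁻ y, g y ∂(empOn T x n ((EM (Ehyp (Phi T φ x) δ) N)ᶜ))
      ≤ ∫⁻ y, g y ∂(empOn T x n ((EM (Ehyp (Phi T φ x) δ) M)ᶜ)) := by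
    intro x
    rw [lintegral_empOn T x n _ hgm, lintegral_empOn T x n _ hgm]
    gcongr with k hk
    split_ifs with h1 h2
    · exact le_rfl
    · exact absurd (hsub x h1) h2
    · exact zero_le
    · exact le_rfl
  have hlin : ∫⁻ y, g y ∂(μ.bind fun x => empOn T x n ((EM (Ehyp (Phi T φ x) δ) N)ᶜ))
      ≤ ∫⁻ y, g y ∂(μ.bind fun x => empOn T x n ((EM (Ehyp (Phi T φ x) δ) M)ᶜ)) := by
    rw [Measure.lintegral_bind (measurable_kap T hφ δ N n).aemeasurable hgm.aemeasurable,
      Measure.lintegral_bind (measurable_kap T hφ δ M n).aemeasurable hgm.aemeasurable]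
    exact lintegral_mono hpoint
  have hintN : ∫ y, f y ∂(μ.bind fun x => empOn T x n ((EM (Ehyp (Phi T φ x) δ) N)ᶜ))
      = (∫⁻ y, g y ∂(μ.bind fun x => empOn T x n ((EM (Ehyp (Phi T φ x) δ) N)ᶜ))).toReal :=
    integral_eq_lintegral_of_nonneg_ae (ae_of_all _ hf0) hf.aestronglyMeasurable
  have hintM : ∫ y, f y ∂(μ.bind fun x => empOn T x n ((EM (Ehyp (Phi T φ x) δ) M)ᶜ))
      = (∫⁻ y, g y ∂(μ.bind fun x => empOn T x n ((EM (Ehyp (Phi T φ x) δ) M)ᶜ))).toReal :=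
    integral_eq_lintegral_of_nonneg_ae (ae_of_all _ hf0) hf.aestronglyMeasurable
  have hfinM : ∫⁻ y, g y ∂(μ.bind fun x => empOn T x n ((EM (Ehyp (Phi T φ x) δ) M)ᶜ)) ≠ ⊤ := by
    have hub : ∫⁻ y, g y ∂(μ.bind fun x => empOn T x n ((EM (Ehyp (Phi T φ x) δ) M)ᶜ))
        ≤ ENNReal.ofReal D * (μ.bind fun x => empOn T x n ((EM (Ehyp (Phi T φ x) δ) M)ᶜ)) Set.univ := by
      rw [← lintegral_const]
      exact lintegral_mono fun y => ENNReal.ofReal_le_ofReal (hfD y)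
    refine ne_top_of_le_ne_top ?_ hub
    exact ENNReal.mul_ne_top ENNReal.ofReal_ne_top
      (lt_of_le_of_lt (bind_univ_le_one T hφ δ M n μ) ENNReal.one_lt_top).ne
  rw [hintN, hintM]
  exact ENNReal.toReal_mono hfinM hlin

end PerN

end Auxiliary

/-- if `ζ_n^M := ∫ μ_x^n[ℕ \ E^δ_{Φ_x}(M)] dξ_n(x)` converges weakly-* along the
infinite set `𝔫` to `ζ^M` for each `M ≥ 1`, then `(ζ^M)_{M≥1}` is setwise nonincreasing and
its setwise limit `ζ` satisfies `∫ φ dζ ≤ ζ(X)·δ`. -/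
theorem statement8 {X : Type*} [MetricSpace X] [CompactSpace X]
    [MeasurableSpace X] [BorelSpace X] (T : X ≃ₜ X)
    (φ : X → ℝ) (hφ : Continuous φ) (δ : ℝ) (hδ : 0 < δ)
    (𝔫 : Set ℕ) (h𝔫 : 𝔫.Infinite)
    (ξ : ℕ → Measure X) (hξ : ∀ n ∈ 𝔫, IsProbabilityMeasure (ξ n))
    (Z : ℕ → Measure X) (hZfin : ∀ M, IsFiniteMeasure (Z M))
    (hconv : ∀ M : ℕ, 1 ≤ M →
      WeakLim (atTop ⊓ 𝓟 𝔫)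
        (fun n => (ξ n).bind fun x => empOn T x n ((EM (Ehyp (Phi T φ x) δ) M)ᶜ))
        (Z M)) :
    (∀ M N : ℕ, 1 ≤ M → M ≤ N → ∀ s : Set X, MeasurableSet s → Z N s ≤ Z M s) ∧
    ∀ ζ : Measure X,
      (∀ s : Set X, MeasurableSet s → Tendsto (fun M => Z M s) atTop (𝓝 (ζ s))) →
        ∫ y, φ y ∂ζ ≤ (ζ Set.univ).toReal * δ := by
  have hIntcont : ∀ (μ : Measure X) [IsFiniteMeasure μ] (f : X → ℝ), Continuous f →
      Integrable f μ := by
    intro μ _ f hf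
    exact hf.integrable_of_hasCompactSupport
      (IsCompact.of_isClosed_subset isCompact_univ (isClosed_tsupport f) (Set.subset_univ _))
  haveI hL : (atTop ⊓ 𝓟 𝔫).NeBot := by
    rw [Filter.inf_principal_neBot_iff]
    intro U hU
    obtain ⟨a, ha⟩ := Filter.mem_atTop_sets.mp hU
    obtain ⟨b, hb, hab⟩ := h𝔫.exists_gt a
    exact ⟨b, ha b hab.le, hb⟩
  have hcf : ∀ M N : ℕ, 1 ≤ M → M ≤ N → ∀ f : C(X,ℝ), (∀ y, 0 ≤ f y) →
      ∫ y, f y ∂(Z N) ≤ ∫ y, f y ∂(Z M) := by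
    intro M N hM hMN f hf0
    obtain ⟨D, hfD⟩ : ∃ D : ℝ, ∀ y, f y ≤ D := by
      rcases isEmpty_or_nonempty X with hX | hX
      · exact ⟨0, fun y => (IsEmpty.elim hX y)⟩
      · obtain ⟨z, _, hz⟩ := isCompact_univ.exists_isMaxOn Set.univ_nonempty
          f.continuous.continuousOn
        exact ⟨f z, fun y => hz (Set.mem_univ y)⟩
    refine le_of_tendsto_of_tendsto (hconv N (hM.trans hMN) f) (hconv M hM f) ?_
    refine Filter.eventually_inf_principal.mpr (Filter.Eventually.of_forall fun n hn => ?_)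
    haveI := hξ n hn
    exact pern_mono T hφ δ hMN n (ξ n) f.continuous hf0 hfD
  have hmono : ∀ M N : ℕ, 1 ≤ M → M ≤ N → ∀ s : Set X, MeasurableSet s → Z N s ≤ Z M s := by
    intro M N hM hMN s hs
    haveI : IsFiniteMeasure (Z M) := hZfin M
    haveI : IsFiniteMeasure (Z N) := hZfin N
    have hclosed : ∀ F : Set X, IsClosed F → Z N F ≤ Z M F := by
      intro F hF
      have hlin : ∀ i : ℕ, ∫⁻ y, (hF.apprSeq i y : ℝ≥0∞) ∂(Z N)
          ≤ ∫⁻ y, (hF.apprSeq i y : ℝ≥0∞) ∂(Z M) := by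
        intro i
        have hcont : Continuous fun y : X => ((hF.apprSeq i y : ℝ≥0) : ℝ) :=
          NNReal.continuous_coe.comp (map_continuous (hF.apprSeq i))
        have hf0 : ∀ y : X, 0 ≤ ((hF.apprSeq i y : ℝ≥0) : ℝ) := fun y => NNReal.coe_nonneg _
        have heq : ∀ μ : Measure X,
            ∫ y, ((hF.apprSeq i y : ℝ≥0) : ℝ) ∂μ
              = (∫⁻ y, (hF.apprSeq i y : ℝ≥0∞) ∂μ).toReal := by
          intro μ
          rw [integral_eq_lintegral_of_nonneg_ae (ae_of_all _ hf0) hcont.aestronglyMeasurable]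
          congr 1
          exact lintegral_congr fun y => ENNReal.ofReal_coe_nnreal
        have hfinite : ∀ (μ : Measure X) [IsFiniteMeasure μ],
            ∫⁻ y, (hF.apprSeq i y : ℝ≥0∞) ∂μ ≠ ⊤ := by
          intro μ _
          have hbd : ∫⁻ y, (hF.apprSeq i y : ℝ≥0∞) ∂μ ≤ ∫⁻ _, 1 ∂μ :=
            lintegral_mono fun y => by
              simpa using ENNReal.coe_le_coe.mpr
                (HasOuterApproxClosed.apprSeq_apply_le_one hF i y)
          refine ne_top_of_le_ne_top ?_ hbd
          simp [measure_ne_top]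
        have hZNM := hcf M N hM hMN ⟨_, hcont⟩ hf0
        simp only [ContinuousMap.coe_mk] at hZNM
        rw [heq (Z N), heq (Z M)] at hZNM
        exact (ENNReal.toReal_le_toReal (hfinite (Z N)) (hfinite (Z M))).mp hZNM
      exact le_of_tendsto_of_tendsto'
        (HasOuterApproxClosed.tendsto_lintegral_apprSeq hF (Z N))
        (HasOuterApproxClosed.tendsto_lintegral_apprSeq hF (Z M)) hlin
    refine ENNReal.le_of_forall_pos_le_add fun ε hε _ => ?_
    obtain ⟨K, hKs, hKc, hK⟩ := hs.exists_isCompact_lt_add (μ := Z N)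
      (measure_ne_top (Z N) s) (ε := (ε : ℝ≥0∞)) (by exact_mod_cast hε.ne')
    calc Z N s ≤ Z N K + ε := hK.le
      _ ≤ Z M K + ε := add_le_add_left (hclosed K hKc.isClosed) _
      _ ≤ Z M s + ε := add_le_add_left (measure_mono hKs) _
  refine ⟨hmono, ?_⟩
  intro ζ hζ
  rcases isEmpty_or_nonempty X with hX | hX
  · haveI := hX
    have hzero : ζ = 0 := Subsingleton.elim ζ 0
    rw [hzero]
    simp
  obtain ⟨z, _, hz⟩ := isCompact_univ.exists_isMaxOn Set.univ_nonempty
    (hφ.abs.continuousOn)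
  set C := |φ z| with hCdef
  have hC0 : 0 ≤ C := abs_nonneg _
  have hb : ∀ y, |φ y| ≤ C := fun y => hz (Set.mem_univ y)
  haveI : IsFiniteMeasure ζ := by
    refine ⟨lt_of_le_of_lt ?_ (measure_lt_top (Z 1) Set.univ)⟩
    exact le_of_tendsto (hζ Set.univ MeasurableSet.univ)
      (eventually_atTop.mpr ⟨1, fun N hN => hmono 1 N le_rfl hN Set.univ MeasurableSet.univ⟩)
  have hζleM : ∀ M : ℕ, 1 ≤ M → ζ ≤ Z M := by
    intro M hM
    rw [Measure.le_iff]
    intro s hs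
    exact le_of_tendsto (hζ s hs) (eventually_atTop.mpr ⟨M, fun N hN => hmono M N hM hN s hs⟩)
  have hMbound : ∀ M : ℕ, 1 ≤ M → ∫ y, φ y ∂(Z M) ≤ δ * ((Z M) Set.univ).toReal := by
    intro M hM
    haveI : IsFiniteMeasure (Z M) := hZfin M
    set fC : C(X,ℝ) := ⟨fun y => C + δ - φ y, by continuity⟩ with hfCdef
    set one : C(X,ℝ) := ⟨fun _ => (1:ℝ), continuous_const⟩ with honedef
    have h1 := hconv M hM fC
    have h2 := (hconv M hM one).const_mul C
    have hev : (fun n => C * ∫ y, one y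
          ∂((ξ n).bind fun x => empOn T x n ((EM (Ehyp (Phi T φ x) δ) M)ᶜ)))
        ≤ᶠ[atTop ⊓ 𝓟 𝔫] fun n => ∫ y, fC y
          ∂((ξ n).bind fun x => empOn T x n ((EM (Ehyp (Phi T φ x) δ) M)ᶜ)) := by
      refine Filter.eventually_inf_principal.mpr (Filter.Eventually.of_forall fun n hn => ?_)
      haveI := hξ n hn
      dsimp only
      have hmain := pern_main T hφ hδ hC0 hb hM n (ξ n)
      have hone' : ∫ y, one y
          ∂((ξ n).bind fun x => empOn T x n ((EM (Ehyp (Phi T φ x) δ) M)ᶜ))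
          = (((ξ n).bind fun x => empOn T x n ((EM (Ehyp (Phi T φ x) δ) M)ᶜ))
              Set.univ).toReal := by
        simp [honedef, Measure.real]
      rw [hone']
      exact hmain
    have hlim := le_of_tendsto_of_tendsto h2 h1 hev
    have hone2 : ∫ y, one y ∂(Z M) = ((Z M) Set.univ).toReal := by simp [honedef, Measure.real]
    have hintf : ∫ y, fC y ∂(Z M)
        = ((Z M) Set.univ).toReal * (C + δ) - ∫ y, φ y ∂(Z M) := by
      have hrw : ∫ y, fC y ∂(Z M) = ∫ y, ((C + δ) - φ y) ∂(Z M) := rfl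
      rw [hrw, integral_sub (integrable_const _) (hIntcont (Z M) φ hφ), integral_const,
        smul_eq_mul]
      rfl
    rw [hone2, hintf] at hlim
    linarith
  have htR : Tendsto (fun M => ((Z M) Set.univ).toReal) atTop (𝓝 ((ζ Set.univ).toReal)) :=
    (ENNReal.tendsto_toReal (measure_ne_top ζ Set.univ)).comp
      (hζ Set.univ MeasurableSet.univ)
  have hchain : ∀ M : ℕ, 1 ≤ M →
      ∫ y, φ y ∂ζ ≤ (δ + C) * ((Z M) Set.univ).toReal - C * (ζ Set.univ).toReal := by
    intro M hM
    haveI : IsFiniteMeasure (Z M) := hZfin M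
    have h1 : ∫ y, (φ y + C) ∂ζ ≤ ∫ y, (φ y + C) ∂(Z M) := by
      refine integral_mono_measure (hζleM M hM) (ae_of_all _ fun y => ?_)
        (hIntcont (Z M) _ (hφ.add continuous_const))
      simp only [Pi.zero_apply]
      have := (abs_le.mp (hb y)).1; linarith
    rw [integral_add (hIntcont ζ φ hφ) (integrable_const C),
      integral_add (hIntcont (Z M) φ hφ) (integrable_const C),
      integral_const, integral_const, smul_eq_mul, smul_eq_mul] at h1
    have h2 := hMbound M hM
    simp only [Measure.real] at h1
    linarith
  have hlimchain : Tendsto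
      (fun M => (δ + C) * ((Z M) Set.univ).toReal - C * (ζ Set.univ).toReal) atTop
      (𝓝 ((δ + C) * (ζ Set.univ).toReal - C * (ζ Set.univ).toReal)) :=
    (htR.const_mul (δ + C)).sub tendsto_const_nhds
  have hfinal := ge_of_tendsto hlimchain (eventually_atTop.mpr ⟨1, fun M hM => hchain M hM⟩)
  have hring : (δ + C) * (ζ Set.univ).toReal - C * (ζ Set.univ).toReal
      = (ζ Set.univ).toReal * δ := by ring
  linarith


end SRB
end
end

section
/- Let φ, ψ : X → ℝ be continuous and let x ∈ X satisfy underline-d_φ(x) = 1 and lim_{δ→0⁺} limsup_{M→∞} d̄(F_{−Ψ_x}^{δ,M}(M)) > 0, where −Ψ_x denotes the real sequence (−ψ(T^n x))_{n∈ℕ}. Then there exist rational numbers δ > 0 and λ > 0 such that lim_{P→∞} liminf_{M→∞} d̄( G^{δ,M}_{−Ψ_x} ∩ E^δ_{Φ_x}(P) ) > λ, where the limit in P is nondecreasing. -/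
open MeasureTheory Filter Topology
open scoped ENNReal

noncomputable section

namespace SRB


variable {a : ℕ → ℝ} {δ δ₀ : ℝ} {M M' : ℕ}

lemma Fweak_sum {p : ℕ} (hp : p ∈ Fweak a δ M) {k : ℕ} (hk1 : p ≤ k + M) (hk2 : k < p) :
    ((p:ℝ) - k) * δ ≤ ∑ l ∈ Finset.Ico k p, a l :=
  hp.2 k (Nat.sub_le_iff_le_add.mpr hk1) hk2

lemma mem_EM_of_F {p r : ℕ} (hp : p ∈ Fweak a δ M) (h1 : r < p) (h2 : p ≤ r + M) :
    r ∈ EM (Fweak a δ M) M := by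
  refine ⟨p - r, by omega, by omega, ?_⟩
  have : r + (p - r) = p := by omega
  rw [this]; exact hp

/-- chaining forward to beyond `t` -/
lemma chainD (hδ : 0 ≤ δ₀) : ∀ (d q t : ℕ), q ≤ t → t - q ≤ d →
    (∀ r, q ≤ r → r ≤ t → r ∈ EM (Fweak a δ₀ M) M) →
    ∃ p, t < p ∧ p ≤ t + M ∧ p ∈ Fweak a δ₀ M ∧
      δ₀ * ((p:ℝ) - q) ≤ ∑ l ∈ Finset.Ico q p, a l := by
  intro d
  induction d with
  | zero =>
    intro q t hqt hd hS
    obtain ⟨m, hm1, hmM, hmF⟩ := hS q le_rfl hqt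
    refine ⟨q + m, by omega, by omega, hmF, ?_⟩
    have := Fweak_sum hmF (k := q) (by omega) (by omega)
    push_cast at this ⊢
    nlinarith [this]
  | succ d ih =>
    intro q t hqt hd hS
    obtain ⟨m, hm1, hmM, hmF⟩ := hS q le_rfl hqt
    have hsum1 : ((q + m : ℕ):ℝ) - q ≤ ((q+m:ℕ):ℝ) - q := le_rfl
    have h1 : ((q + m :ℕ):ℝ) - q = (m:ℝ) := by push_cast; ring
    have hs1 := Fweak_sum hmF (k := q) (by omega) (by omega)
    by_cases hlt : t < q + m
    · exact ⟨q + m, hlt, by omega, hmF, by rw [mul_comm]; exact hs1⟩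
    · push_neg at hlt
      obtain ⟨p, hp1, hp2, hp3, hp4⟩ := ih (q + m) t hlt (by omega)
        (fun r hr1 hr2 => hS r (by omega) hr2)
      refine ⟨p, hp1, hp2, hp3, ?_⟩
      rw [← Finset.sum_Ico_consecutive a (by omega : q ≤ q + m) (by omega : q + m ≤ p)]
      have : δ₀ * ((p:ℝ) - q) = (((q+m:ℕ):ℝ) - (q:ℝ)) * δ₀ + δ₀ * ((p:ℝ) - ((q+m:ℕ):ℝ)) := by
        push_cast; ring
      rw [this]
      exact add_le_add hs1 hp4

/-- rate δ over any stretch inside `EM (Fweak a δ M') M'` ending at an `Fweak` point -/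
lemma chainA (hδ : 0 ≤ δ) : ∀ (d k p : ℕ), p - k ≤ d → k < p → p ∈ Fweak a δ M' →
    (∀ r, k ≤ r → r < p → r ∈ EM (Fweak a δ M') M') →
    δ * ((p:ℝ) - k) ≤ ∑ l ∈ Finset.Ico k p, a l := by
  intro d
  induction d with
  | zero => intro k p hd hk _ _; omega
  | succ d ih =>
    intro k p hd hk hp hS
    by_cases hle : p ≤ k + M'
    · rw [mul_comm]; exact Fweak_sum hp hle hk
    · push_neg at hle
      obtain ⟨m, hm1, hmM, hmF⟩ := hS k le_rfl hk
      have hq : k + m < p := by omega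
      have hs1 := Fweak_sum hmF (k := k) (by omega) (by omega)
      have hs2 := ih (k + m) p (by omega) hq hp (fun r hr1 hr2 => hS r (by omega) hr2)
      rw [← Finset.sum_Ico_consecutive a (by omega : k ≤ k + m) (by omega : k + m ≤ p)]
      have : δ * ((p:ℝ) - k) = (((k+m:ℕ):ℝ) - (k:ℝ)) * δ + δ * ((p:ℝ) - ((k+m:ℕ):ℝ)) := by
        push_cast; ring
      rw [this]
      exact add_le_add hs1 hs2



variable {a : ℕ → ℝ} {δ δ₀ : ℝ} {M M' : ℕ}

set_option maxHeartbeats 1600000 in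
/-- Core counting lemma for one run `[s,t] ⊆ EM (Fweak a δ₀ M) M`. -/
lemma runCount (A : ℝ) (hA : 0 < A) (hδ : 0 < δ) (hδ₀ : 2*δ ≤ δ₀)
    (hstep : ∀ l, a l - δ ≤ A) (hM : 1 ≤ M) (hM' : 1 ≤ M') {s t : ℕ}
    (hs : 1 ≤ s) (hst : s ≤ t)
    (hS : ∀ r, s ≤ r → r ≤ t → r ∈ EM (Fweak a δ₀ M) M) :
    ∃ R : Finset ℕ,
      ↑R ⊆ Gmild a δ M' ∧ R ⊆ Finset.Icc (s+1) (t+M) ∧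
      (t + 1 ∉ EM (Fweak a δ₀ M) M → R ⊆ Finset.Icc (s+1) t) ∧
      (δ₀/(2*A)) * ((t:ℝ) + 1 - s) - (M' : ℝ) - (((t:ℝ) + M - s)/M' + 1) ≤ R.card := by
  classical
  have hδ₀pos : 0 < δ₀ := by linarith
  obtain ⟨q, hq1, hq2, hqF, hqsum⟩ := chainD (le_of_lt hδ₀pos) (t - s) s t hst le_rfl hS
  set b : ℕ → ℝ := fun r => (∑ l ∈ Finset.Ico s r, a l) - ((r:ℝ) - s) * δ with hb
  set pred : ℕ → Prop := fun p => ∀ k ∈ Finset.Ico s p, b k ≤ b p with hpred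
  set cnt : ℕ → ℕ := fun r => ((Finset.Icc (s+1) r).filter pred).card with hcnt
  have hbs : b s = 0 := by simp [hb]
  -- the invariant
  have inv : ∀ r, s ≤ r → r ≤ q → ∀ k, s ≤ k → k ≤ r → b k ≤ A * cnt r := by
    intro r hr
    induction r, hr using Nat.le_induction with
    | base =>
      intro _ k hk1 hk2
      have : k = s := le_antisymm hk2 hk1
      subst this
      rw [hbs]
      positivity
    | succ r hr IH =>
      intro hq k hk1 hk2
      have hrq : r ≤ q := by omega
      have hsub : ((Finset.Icc (s+1) r).filter pred) ⊆ ((Finset.Icc (s+1) (r+1)).filter pred) :=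
        Finset.filter_subset_filter _ (Finset.Icc_subset_Icc_right (by omega))
      have hmono : (cnt r : ℝ) ≤ cnt (r+1) := by
        exact_mod_cast Finset.card_le_card hsub
      rcases Nat.lt_or_ge k (r+1) with hk | hk
      · calc b k ≤ A * cnt r := IH hrq k hk1 (by omega)
          _ ≤ A * cnt (r+1) := by nlinarith
      · have hk' : k = r + 1 := by omega
        subst hk'
        have hbr : b (r+1) = b r + (a r - δ) := by
          rw [hb]
          simp only
          rw [Finset.sum_Ico_succ_top hr]
          push_cast
          ring
        by_cases hrec : ∀ k ∈ Finset.Ico s (r+1), b k ≤ b (r+1)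
        · have hmem : (r+1) ∈ (Finset.Icc (s+1) (r+1)).filter pred :=
            Finset.mem_filter.mpr ⟨Finset.mem_Icc.mpr ⟨by omega, le_rfl⟩, hrec⟩
          have hnot : (r+1) ∉ (Finset.Icc (s+1) r).filter pred := by
            intro hcon
            have := (Finset.mem_Icc.mp (Finset.mem_filter.mp hcon).1).2
            omega
          have hins : insert (r+1) ((Finset.Icc (s+1) r).filter pred)
              ⊆ (Finset.Icc (s+1) (r+1)).filter pred :=
            Finset.insert_subset hmem hsub
          have hcard : cnt r + 1 ≤ cnt (r+1) := by
            have := Finset.card_le_card hins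
            rwa [Finset.card_insert_of_notMem hnot] at this
          have hcard' : (cnt r : ℝ) + 1 ≤ cnt (r+1) := by exact_mod_cast hcard
          have h1 : b r ≤ A * cnt r := IH hrq r hr le_rfl
          have h2 := hstep r
          nlinarith
        · push_neg at hrec
          obtain ⟨k₀, hk₀m, hk₀⟩ := hrec
          simp only [Finset.mem_Ico] at hk₀m
          have h1 : b k₀ ≤ A * cnt r := IH hrq k₀ hk₀m.1 (by omega)
          have h2 : b (r+1) ≤ b k₀ := le_of_lt hk₀
          calc b (r+1) ≤ A * cnt r := le_trans h2 h1
            _ ≤ A * cnt (r+1) := by nlinarith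
  set R0 : Finset ℕ := (Finset.Icc (s+1) q).filter pred with hR0
  have hR0sub : R0 ⊆ Finset.Icc (s+1) q := Finset.filter_subset _ _
  have hR0mem : ∀ p ∈ R0, (s+1 ≤ p ∧ p ≤ q) ∧ pred p := by
    intro p hp
    have h1 := Finset.mem_Icc.mp (hR0sub hp)
    exact ⟨h1, (Finset.mem_filter.mp hp).2⟩
  have hR0card : b q ≤ A * R0.card := inv q (by omega) le_rfl q (by omega) le_rfl
  -- growth lower bound
  have hgrow : (δ₀/2) * ((t:ℝ) + 1 - s) ≤ A * R0.card := by
    have hqs : (s:ℝ) ≤ q := by exact_mod_cast (by omega : s ≤ q)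
    have ht1q : ((t:ℝ) + 1) ≤ q := by exact_mod_cast (by omega : t + 1 ≤ q)
    have hbq : b q = (∑ l ∈ Finset.Ico s q, a l) - ((q:ℝ) - s) * δ := rfl
    nlinarith [hqsum]
  have hm : (δ₀/(2*A)) * ((t:ℝ) + 1 - s) ≤ R0.card := by
    rw [div_mul_eq_mul_div, div_le_iff₀ (by linarith : (0:ℝ) < 2*A)]
    nlinarith
  -- decomposition of R0
  set R : Finset ℕ := R0.filter (fun p => s + M' ≤ p ∧ ∃ p' ∈ R0, p < p' ∧ p' ≤ p + M') with hR
  set shallow : Finset ℕ := R0.filter (fun p => p < s + M') with hsh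
  set lonely : Finset ℕ := R0.filter (fun p => ¬ ∃ p' ∈ R0, p < p' ∧ p' ≤ p + M') with hlo
  have hcover : R0 ⊆ shallow ∪ lonely ∪ R := by
    intro p hp
    simp only [Finset.mem_union, hsh, hlo, hR, Finset.mem_filter]
    by_cases h1 : p < s + M'
    · exact Or.inl (Or.inl ⟨hp, h1⟩)
    · by_cases h2 : ∃ p' ∈ R0, p < p' ∧ p' ≤ p + M'
      · exact Or.inr ⟨hp, by omega, h2⟩
      · exact Or.inl (Or.inr ⟨hp, h2⟩)
  have hshcard : (shallow.card : ℝ) ≤ M' := by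
    have hsub : shallow ⊆ Finset.Icc (s+1) (s+M'-1) := by
      intro p hp
      have h1 := Finset.mem_filter.mp hp
      have h2 := Finset.mem_Icc.mp (hR0sub h1.1)
      have h3 := h1.2
      exact Finset.mem_Icc.mpr (by omega)
    have h4 := Finset.card_le_card hsub
    rw [Nat.card_Icc] at h4
    have : shallow.card ≤ M' := by omega
    exact_mod_cast this
  have hM'pos : (0:ℝ) < M' := by exact_mod_cast hM'
  have hlocard : (lonely.card : ℝ) ≤ ((t:ℝ) + M - s)/M' + 1 := by
    have hmaps : ∀ p ∈ lonely, (p - (s+1))/M' ∈ Finset.range ((q - (s+1))/M' + 1) := by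
      intro p hp
      have h1 := Finset.mem_Icc.mp (hR0sub (Finset.mem_filter.mp hp).1)
      have h2 := Nat.div_le_div_right (c := M') (by omega : p - (s+1) ≤ q - (s+1))
      simp only [Finset.mem_range]
      omega
    have key : ∀ p ∈ lonely, ∀ p' ∈ lonely, p < p' → (p - (s+1))/M' ≠ (p' - (s+1))/M' := by
      intro p hp p' hp' hlt
      have h1 := Finset.mem_filter.mp hp
      have h1' := Finset.mem_filter.mp hp'
      have hIp := Finset.mem_Icc.mp (hR0sub h1.1)
      have hIp' := Finset.mem_Icc.mp (hR0sub h1'.1)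
      have hnl := h1.2
      have hsep : p + M' < p' := by
        by_contra hc
        push_neg at hc
        exact hnl ⟨p', h1'.1, hlt, hc⟩
      have hadd : (p - (s+1)) + M' ≤ p' - (s+1) := by omega
      have h2 := Nat.add_div_right (p - (s+1)) (show 0 < M' by omega)
      have h3 := Nat.div_le_div_right (c := M') hadd
      omega
    have hinj : ∀ p ∈ lonely, ∀ p' ∈ lonely, (p - (s+1))/M' = (p' - (s+1))/M' → p = p' := by
      intro p hp p' hp' hf
      rcases lt_trichotomy p p' with h | h | h
      · exact absurd hf (key p hp p' hp' h)
      · exact h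
      · exact absurd hf.symm (key p' hp' p hp h)
    have hcard := Finset.card_le_card_of_injOn _ hmaps (fun p hp p' hp' => hinj p hp p' hp')
    rw [Finset.card_range] at hcard
    have hc1 : (lonely.card : ℝ) ≤ (((q - (s+1))/M' : ℕ) : ℝ) + 1 := by exact_mod_cast hcard
    have hc2 : (((q - (s+1))/M' : ℕ) : ℝ) ≤ ((q - (s+1) : ℕ) : ℝ)/(M' : ℝ) := Nat.cast_div_le
    have hc3 : ((q - (s+1) : ℕ) : ℝ) ≤ (t:ℝ) + M - s := by
      have h4 : ((q - (s+1) : ℕ) : ℝ) ≤ (q:ℝ) - s - 1 + 1 := by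
        push_cast [Nat.cast_sub (show s+1 ≤ q by omega)]
        push_cast
        linarith
      have h5 : (q:ℝ) ≤ (t:ℝ) + M := by exact_mod_cast hq2
      linarith
    have hc4 : ((q - (s+1) : ℕ) : ℝ)/(M':ℝ) ≤ ((t:ℝ) + M - s)/M' :=
      (div_le_div_iff_of_pos_right hM'pos).mpr hc3
    linarith
  -- cardinality lower bound for R
  have hRcard : (δ₀/(2*A)) * ((t:ℝ) + 1 - s) - (M' : ℝ) - (((t:ℝ) + M - s)/M' + 1)
      ≤ (R.card : ℝ) := by
    have h1 : R0.card ≤ shallow.card + lonely.card + R.card := by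
      calc R0.card ≤ (shallow ∪ lonely ∪ R).card := Finset.card_le_card hcover
        _ ≤ (shallow ∪ lonely).card + R.card := Finset.card_union_le _ _
        _ ≤ shallow.card + lonely.card + R.card := by
            have := Finset.card_union_le shallow lonely
            omega
    have h2 : (R0.card : ℝ) ≤ (shallow.card : ℝ) + lonely.card + R.card := by exact_mod_cast h1
    linarith
  -- membership of R in Gmild
  have deepF : ∀ p ∈ R0, s + M' ≤ p → p ∈ Fweak a δ M' := by
    intro p hp hdeep
    obtain ⟨⟨hp1, hp2⟩, hppred⟩ := hR0mem p hp
    refine ⟨by omega, ?_⟩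
    intro k hk1 hk2
    have hks : s ≤ k := by omega
    have hbk : b k ≤ b p := hppred k (Finset.mem_Ico.mpr ⟨hks, hk2⟩)
    have hsplit := Finset.sum_Ico_consecutive a hks (le_of_lt hk2)
    simp only [hb] at hbk
    have hmul : ((p:ℝ) - k) * δ = ((p:ℝ) - s) * δ - ((k:ℝ) - s) * δ := by ring
    linarith [hbk, hsplit, hmul]
  have hRG : ↑R ⊆ Gmild a δ M' := by
    intro p hp
    have hpf := Finset.mem_filter.mp (Finset.mem_coe.mp hp)
    have hpR0 := hpf.1
    have hdeep : s + M' ≤ p := hpf.2.1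
    obtain ⟨p', hp'R0, hplt, hple⟩ := hpf.2.2
    have hpF : p ∈ Fweak a δ M' := deepF p hpR0 hdeep
    have hp'F : p' ∈ Fweak a δ M' := deepF p' hp'R0 (by omega)
    have hpS : p ∈ EM (Fweak a δ M') M' := by
      refine ⟨p' - p, by omega, by omega, ?_⟩
      rwa [show p + (p' - p) = p' from by omega]
    refine ⟨hpS, ?_⟩
    intro k hk hklt
    obtain ⟨hkS, hkcomp⟩ := hk
    have hallS : ∀ r, k ≤ r → r < p → r ∈ EM (Fweak a δ M') M' := by
      intro r h1 h2
      exact hkcomp r (by rw [min_eq_right (le_of_lt hklt)]; exact h1)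
        (by rw [max_eq_left (le_of_lt hklt)]; omega)
    have hchain := chainA (le_of_lt hδ) (p - k) k p le_rfl hklt hpF hallS
    have hcast : (0:ℝ) ≤ (p:ℝ) - k := by
      have : (k:ℝ) ≤ p := by exact_mod_cast le_of_lt hklt
      linarith
    have hhalf : ((p:ℝ) - k) * (δ/2) ≤ ((p:ℝ) - k) * δ :=
      mul_le_mul_of_nonneg_left (by linarith) hcast
    have hcomm : δ * ((p:ℝ) - k) = ((p:ℝ) - k) * δ := mul_comm _ _
    linarith [hchain, hhalf, hcomm]
  -- placement
  have hplace : R ⊆ Finset.Icc (s+1) (t+M) := by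
    intro p hp
    have h1 := Finset.mem_Icc.mp (hR0sub (Finset.mem_filter.mp hp).1)
    exact Finset.mem_Icc.mpr (by omega)
  have hplace2 : t + 1 ∉ EM (Fweak a δ₀ M) M → R ⊆ Finset.Icc (s+1) t := by
    intro hmax p hp
    have hqeq : q = t + 1 := by
      by_contra hne
      have hqgt : t + 1 < q := by omega
      exact hmax (mem_EM_of_F hqF hqgt (by omega))
    have hpf := Finset.mem_filter.mp hp
    obtain ⟨p', hp'R0, hplt, _⟩ := hpf.2.2
    have h1 := Finset.mem_Icc.mp (hR0sub hpf.1)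
    have h2 := Finset.mem_Icc.mp (hR0sub hp'R0)
    exact Finset.mem_Icc.mpr (by omega)
  exact ⟨R, hRG, hplace, hplace2, hRcard⟩



variable {a : ℕ → ℝ} {δ δ₀ : ℝ} {M M' : ℕ}

set_option maxHeartbeats 3200000 in
/-- Global counting: if `S = EM (Fweak a δ₀ M) M` has at least `c*n` points in `[1,n]`,
then `Gmild a δ M'` has many points in `[1, n+M]`. -/
lemma globalCount (A : ℝ) (hA : 0 < A) (hδ : 0 < δ) (hδ₀ : 2*δ ≤ δ₀)
    (hstep : ∀ l, a l - δ ≤ A) (hM' : 1 ≤ M') (hMM' : M' * (2*M' + 1) ≤ M)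
    (n : ℕ) (hn : 1 ≤ n) (c : ℝ)
    (hc : c * n ≤ (Set.ncard (EM (Fweak a δ₀ M) M ∩ Set.Icc 1 n) : ℝ)) :
    (δ₀/(2*A)) * c * n - 3*(n:ℝ)/M' - (2*((M':ℝ)+1) + 2*(M:ℝ)/M')
      ≤ (Set.ncard (Gmild a δ M' ∩ Set.Icc 1 (n+M)) : ℝ) := by
  classical
  have hM : 1 ≤ M := by
    have h3 : 1 * (2*1+1) ≤ M' * (2*M'+1) := Nat.mul_le_mul hM' (by omega)
    omega
  set S : Set ℕ := EM (Fweak a δ₀ M) M with hSdef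
  set K : ℝ := δ₀/(2*A) with hK
  have hδ₀pos : 0 < δ₀ := by linarith
  have hKpos : 0 < K := by positivity
  set rstart : ℕ → Prop := fun s => s ∈ S ∧ (s = 1 ∨ (s-1) ∉ S) with hrstart
  set D : Finset ℕ := (Finset.Icc 1 n).filter rstart with hD
  have hDmem : ∀ s ∈ D, (1 ≤ s ∧ s ≤ n) ∧ s ∈ S ∧ (s = 1 ∨ (s-1) ∉ S) := by
    intro s hs
    have h1 := Finset.mem_filter.mp hs
    exact ⟨Finset.mem_Icc.mp h1.1, h1.2⟩
  have He : ∀ s, s ≤ n → ∃ j, s + j = n ∨ (s + j + 1) ∉ S := fun s hs => ⟨n - s, by omega⟩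
  set e : ℕ → ℕ := fun s => if h : s ≤ n then s + Nat.find (He s h) else s with he
  have he1 : ∀ s, s ≤ e s := by
    intro s; rw [he]; dsimp only; split <;> omega
  have he2 : ∀ s, s ≤ n → e s ≤ n := by
    intro s hs
    rw [he]; dsimp only; rw [dif_pos hs]
    have : Nat.find (He s hs) ≤ n - s := Nat.find_min' _ (by omega)
    omega
  have he4 : ∀ s, s ≤ n → (e s = n ∨ (e s + 1) ∉ S) := by
    intro s hs
    rw [he]; dsimp only; rw [dif_pos hs]
    exact Nat.find_spec (He s hs)
  have he3 : ∀ s, s ≤ n → s ∈ S → ∀ r, s ≤ r → r ≤ e s → r ∈ S := by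
    intro s hs hsS r hr1 hr2
    rcases Nat.eq_or_lt_of_le hr1 with h | h
    · rwa [← h]
    · have hj : r - s - 1 < Nat.find (He s hs) := by
        rw [he] at hr2; dsimp only at hr2; rw [dif_pos hs] at hr2; omega
      have hmin := Nat.find_min (He s hs) hj
      push_neg at hmin
      have h2 : s + (r - s - 1) + 1 ∈ S := hmin.2
      rwa [show s + (r - s - 1) + 1 = r from by omega] at h2
  -- coverage
  have cover : ∀ q, q ∈ S → 1 ≤ q → q ≤ n → ∃ s ∈ D, s ≤ q ∧ q ≤ e s := by
    intro q
    induction q using Nat.strong_induction_on with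
    | _ q IH =>
      intro hqS hq1 hqn
      by_cases hqr : rstart q
      · exact ⟨q, Finset.mem_filter.mpr ⟨Finset.mem_Icc.mpr ⟨hq1, hqn⟩, hqr⟩, le_rfl, he1 q⟩
      · have hqr' : ¬ (q ∈ S ∧ (q = 1 ∨ (q-1) ∉ S)) := hqr
        have hq2 : 2 ≤ q := by
          by_contra hcon
          exact hqr' ⟨hqS, Or.inl (by omega)⟩
        have hqm : q - 1 ∈ S := by
          by_contra hcon
          exact hqr' ⟨hqS, Or.inr hcon⟩
        obtain ⟨s, hsD, hs1, hs2⟩ := IH (q-1) (by omega) hqm (by omega) (by omega)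
        refine ⟨s, hsD, by omega, ?_⟩
        have hsn := (hDmem s hsD).1.2
        rcases he4 s hsn with h | h
        · omega
        · by_contra hcon
          have heq : e s = q - 1 := by omega
          rw [heq] at h
          exact h (by rwa [show q - 1 + 1 = q from by omega])
  -- disjointness of runs
  have hdisj : ∀ s ∈ D, ∀ s' ∈ D, s < s' → e s < s' := by
    intro s hs s' hs' hlt
    by_contra hcon
    push_neg at hcon
    have h1 := hDmem s hs
    have h2 := hDmem s' hs'
    have hmem : s' - 1 ∈ S := he3 s h1.1.2 h1.2.1 (s'-1) (by omega) (by omega)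
    rcases h2.2.2 with h | h
    · omega
    · exact h hmem
  -- length of untruncated runs
  have hlen : ∀ s ∈ D, 2 ≤ s → e s < n → M ≤ e s + 1 - s := by
    intro s hs hs2 hsn
    have h1 := hDmem s hs
    obtain ⟨m, hm1, hmM, hF⟩ := h1.2.1
    have hblock : ∀ r, s + m ≤ r + M → r < s + m → r ∈ S :=
      fun r hr1 hr2 => mem_EM_of_F hF hr2 hr1
    have hs1 : (s - 1) ∉ S := by
      rcases h1.2.2 with h | h
      · omega
      · exact h
    have hmeq : m = M := by
      by_contra hne
      exact hs1 (hblock (s-1) (by omega) (by omega))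
    by_contra hcon
    push_neg at hcon
    have h5 := he1 s
    have hin : e s + 1 ∈ S := hblock (e s + 1) (by omega) (by omega)
    rcases he4 s h1.1.2 with h | h
    · omega
    · exact h hin
  -- per-run record sets
  have hrun : ∀ s ∈ D, ∃ R : Finset ℕ, ↑R ⊆ Gmild a δ M' ∧
      R ⊆ Finset.Icc (s+1) (e s + M) ∧
      (e s + 1 ∉ S → R ⊆ Finset.Icc (s+1) (e s)) ∧
      K * ((e s :ℝ) + 1 - s) - (M' : ℝ) - (((e s:ℝ) + M - s)/M' + 1) ≤ R.card := by
    intro s hs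
    have h1 := hDmem s hs
    exact runCount A hA hδ hδ₀ hstep hM hM' h1.1.1 (he1 s)
      (he3 s h1.1.2 h1.2.1)
  choose Rf hRf1 hRf2 hRf3 hRf4 using hrun
  -- disjointness of the record sets
  have hRdisj : ∀ s (hs : s ∈ D), ∀ s' (hs' : s' ∈ D), s < s' →
      Disjoint (Rf s hs) (Rf s' hs') := by
    intro s hs s' hs' hlt
    have hes : e s < s' := hdisj s hs s' hs' hlt
    have hesn : e s < n := lt_of_lt_of_le hes (hDmem s' hs').1.2
    have hnotS : e s + 1 ∉ S := by
      rcases he4 s (hDmem s hs).1.2 with h | h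
      · omega
      · exact h
    have hsub := hRf3 s hs hnotS
    rw [Finset.disjoint_left]
    intro x hx hx'
    have h1 := Finset.mem_Icc.mp (hsub hx)
    have h2 := Finset.mem_Icc.mp (hRf2 s' hs' hx')
    omega
  -- the union
  set U : Finset ℕ := D.attach.biUnion (fun x => Rf x.1 x.2) with hU
  have hUdisj : ∀ x ∈ D.attach, ∀ y ∈ D.attach, x ≠ y →
      Disjoint (Rf x.1 x.2) (Rf y.1 y.2) := by
    intro x _ y _ hxy
    have hne : x.1 ≠ y.1 := fun h => hxy (Subtype.ext h)
    rcases lt_trichotomy x.1 y.1 with h | h | h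
    · exact hRdisj x.1 x.2 y.1 y.2 h
    · exact absurd h hne
    · exact (hRdisj y.1 y.2 x.1 x.2 h).symm
  have hUcard : U.card = ∑ x ∈ D.attach, (Rf x.1 x.2).card := Finset.card_biUnion hUdisj
  set GF : Finset ℕ := (Finset.Icc 1 (n+M)).filter (· ∈ Gmild a δ M') with hGF
  have hUsub : U ⊆ GF := by
    intro x hx
    rw [hU] at hx
    obtain ⟨s, _, hxR⟩ := Finset.mem_biUnion.mp hx
    have h1 := Finset.mem_Icc.mp (hRf2 s.1 s.2 hxR)
    have h2 : e s.1 ≤ n := he2 s.1 (hDmem s.1 s.2).1.2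
    have h3 : x ∈ Gmild a δ M' := hRf1 s.1 s.2 hxR
    exact Finset.mem_filter.mpr ⟨Finset.mem_Icc.mpr ⟨by omega, by omega⟩, h3⟩
  -- link the Finset card with the set ncard
  have hGFcard : (GF.card : ℝ) ≤ (Set.ncard (Gmild a δ M' ∩ Set.Icc 1 (n+M)) : ℝ) := by
    have hset : (Gmild a δ M' ∩ Set.Icc 1 (n+M)) = ↑GF := by
      ext z
      simp only [hGF, Finset.coe_filter, Finset.mem_Icc, Set.mem_inter_iff, Set.mem_Icc,
        Set.mem_setOf_eq]
      tauto
    rw [hset, Set.ncard_coe_finset]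
  -- sums
  set Sum1 : ℝ := ∑ x ∈ D.attach, ((e x.1 : ℝ) + 1 - x.1) with hSum1
  have hM'pos : (0:ℝ) < M' := by exact_mod_cast hM'
  have hMpos : (0:ℝ) < M := by exact_mod_cast hM
  set B : ℝ := (M':ℝ) + 1 + ((M:ℝ) - 1)/M' with hB
  have hM1 : (1:ℝ) ≤ M := by exact_mod_cast hM
  have hBnn : 0 ≤ B := by
    have h0 : 0 ≤ ((M:ℝ) - 1)/M' := div_nonneg (by linarith) hM'pos.le
    rw [hB]; linarith [hM'pos]
  -- lower bound on GF.card
  have hGFlow : K * Sum1 - Sum1/M' - (D.card : ℝ) * B ≤ (GF.card : ℝ) := by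
    have hsum : ∑ x ∈ D.attach, (K * ((e x.1:ℝ) + 1 - x.1)
        - (M' : ℝ) - (((e x.1:ℝ) + M - x.1)/M' + 1)) ≤ (GF.card : ℝ) := by
      calc ∑ x ∈ D.attach, (K * ((e x.1:ℝ) + 1 - x.1)
            - (M' : ℝ) - (((e x.1:ℝ) + M - x.1)/M' + 1))
          ≤ ∑ x ∈ D.attach, ((Rf x.1 x.2).card : ℝ) :=
            Finset.sum_le_sum (fun x _ => hRf4 x.1 x.2)
        _ = (U.card : ℝ) := by rw [hUcard]; push_cast; ring
        _ ≤ (GF.card : ℝ) := by exact_mod_cast Finset.card_le_card hUsub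
    have heq : ∑ x ∈ D.attach, (K * ((e x.1:ℝ) + 1 - x.1)
        - (M' : ℝ) - (((e x.1:ℝ) + M - x.1)/M' + 1))
        = K * Sum1 - Sum1/M' - (D.card : ℝ) * B := by
      have h1 : ∀ x ∈ D.attach, K * ((e x.1:ℝ) + 1 - x.1)
          - (M' : ℝ) - (((e x.1:ℝ) + M - x.1)/M' + 1)
          = K * ((e x.1:ℝ) + 1 - x.1) - ((e x.1:ℝ) + 1 - x.1)/M' - B := by
        intro x _
        rw [hB]
        field_simp
        ring
      rw [Finset.sum_congr rfl h1, Finset.sum_sub_distrib, Finset.sum_sub_distrib,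
        Finset.sum_const, Finset.card_attach, ← Finset.sum_div, ← Finset.mul_sum,
        ← hSum1, nsmul_eq_mul]
    linarith [hsum, heq.symm.le]
  -- Sum1 ≥ c * n
  have hSum1_ge : c * n ≤ Sum1 := by
    set SF : Finset ℕ := (Finset.Icc 1 n).filter (· ∈ S) with hSF
    have hset : (S ∩ Set.Icc 1 n) = ↑SF := by
      ext z
      simp only [hSF, Finset.coe_filter, Finset.mem_Icc, Set.mem_inter_iff, Set.mem_Icc,
        Set.mem_setOf_eq]
      tauto
    have hcard1 : (Set.ncard (S ∩ Set.Icc 1 n) : ℝ) = (SF.card : ℝ) := by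
      rw [hset, Set.ncard_coe_finset]
    have hsub : SF ⊆ D.attach.biUnion (fun x => Finset.Icc x.1 (e x.1)) := by
      intro q hq
      have h1 := Finset.mem_filter.mp hq
      have h2 := Finset.mem_Icc.mp h1.1
      obtain ⟨s, hsD, hs1, hs2⟩ := cover q h1.2 h2.1 h2.2
      exact Finset.mem_biUnion.mpr ⟨⟨s, hsD⟩, Finset.mem_attach _ _,
        Finset.mem_Icc.mpr ⟨hs1, hs2⟩⟩
    have hcard2 : SF.card ≤ ∑ x ∈ D.attach, (e x.1 + 1 - x.1) := by
      calc SF.card ≤ (D.attach.biUnion (fun x => Finset.Icc x.1 (e x.1))).card :=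
            Finset.card_le_card hsub
        _ ≤ ∑ x ∈ D.attach, (Finset.Icc x.1 (e x.1)).card := Finset.card_biUnion_le
        _ = ∑ x ∈ D.attach, (e x.1 + 1 - x.1) := by
            apply Finset.sum_congr rfl
            intro x _
            rw [Nat.card_Icc]
    have hcast : ((∑ x ∈ D.attach, (e x.1 + 1 - x.1) : ℕ) : ℝ) = Sum1 := by
      rw [hSum1, Nat.cast_sum]
      apply Finset.sum_congr rfl
      intro x _
      have := he1 x.1
      push_cast [Nat.cast_sub (show x.1 ≤ e x.1 + 1 by omega)]
      ring
    have : (SF.card : ℝ) ≤ Sum1 := by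
      rw [← hcast]; exact_mod_cast hcard2
    linarith [hc, hcard1.symm.le, this]
  -- Sum1 ≤ n
  have hSum1_le : Sum1 ≤ n := by
    have hVdisj : ∀ x ∈ D.attach, ∀ y ∈ D.attach, x ≠ y →
        Disjoint (Finset.Icc x.1 (e x.1)) (Finset.Icc y.1 (e y.1)) := by
      intro x _ y _ hxy
      have hne : x.1 ≠ y.1 := fun h => hxy (Subtype.ext h)
      have key : ∀ u v : {z // z ∈ D}, u.1 < v.1 →
          Disjoint (Finset.Icc u.1 (e u.1)) (Finset.Icc v.1 (e v.1)) := by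
        intro u v huv
        have := hdisj u.1 u.2 v.1 v.2 huv
        rw [Finset.disjoint_left]
        intro z hz hz'
        have h1 := Finset.mem_Icc.mp hz
        have h2 := Finset.mem_Icc.mp hz'
        omega
      rcases lt_trichotomy x.1 y.1 with h | h | h
      · exact key x y h
      · exact absurd h hne
      · exact (key y x h).symm
    have hVsub : D.attach.biUnion (fun x => Finset.Icc x.1 (e x.1)) ⊆ Finset.Icc 1 n := by
      intro z hz
      obtain ⟨s, _, hzI⟩ := Finset.mem_biUnion.mp hz
      have h1 := Finset.mem_Icc.mp hzI
      have h2 := (hDmem s.1 s.2).1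
      have h3 := he2 s.1 h2.2
      exact Finset.mem_Icc.mpr ⟨by omega, by omega⟩
    have hVcard : ∑ x ∈ D.attach, (Finset.Icc x.1 (e x.1)).card ≤ n := by
      rw [← Finset.card_biUnion hVdisj]
      calc (D.attach.biUnion fun x => Finset.Icc x.1 (e x.1)).card
          ≤ (Finset.Icc 1 n).card := Finset.card_le_card hVsub
        _ = n := by rw [Nat.card_Icc]; omega
    have hcast : Sum1 = ((∑ x ∈ D.attach, (Finset.Icc x.1 (e x.1)).card : ℕ) : ℝ) := by
      rw [hSum1, Nat.cast_sum]
      apply Finset.sum_congr rfl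
      intro x _
      rw [Nat.card_Icc]
      have := he1 x.1
      push_cast [Nat.cast_sub (show x.1 ≤ e x.1 + 1 by omega)]
      ring
    rw [hcast]
    exact_mod_cast hVcard
  -- bound on the number of runs
  have hDcard : (D.card : ℝ) * M ≤ Sum1 + 2 * M := by
    set Dbig : Finset ℕ := D.filter (fun s => 2 ≤ s ∧ e s < n) with hDbig
    have hsmall : D.card ≤ Dbig.card + 2 := by
      have hsub2 : D \ Dbig ⊆ insert 1 (D.filter (fun s => e s = n)) := by
        intro s hs
        rw [Finset.mem_sdiff] at hs
        have h1 := hs.1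
        have h2 := hs.2
        rw [hDbig, Finset.mem_filter] at h2
        push_neg at h2
        by_cases hcase : 2 ≤ s
        · have : e s = n := by
            have h3 := h2 h1 hcase
            have h4 := he2 s (hDmem s h1).1.2
            omega
          exact Finset.mem_insert.mpr (Or.inr (Finset.mem_filter.mpr ⟨h1, this⟩))
        · have : s = 1 := by
            have := (hDmem s h1).1.1
            omega
          exact Finset.mem_insert.mpr (Or.inl this)
      have hone : (D.filter (fun s => e s = n)).card ≤ 1 := by
        rw [Finset.card_le_one]
        intro u hu v hv
        rw [Finset.mem_filter] at hu hv
        by_contra hne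
        rcases lt_trichotomy u v with h | h | h
        · have := hdisj u hu.1 v hv.1 h
          have := (hDmem v hv.1).1.2
          omega
        · exact hne h
        · have := hdisj v hv.1 u hu.1 h
          have := (hDmem u hu.1).1.2
          omega
      have hcard3 : (D \ Dbig).card ≤ 2 := by
        calc (D \ Dbig).card ≤ (insert 1 (D.filter (fun s => e s = n))).card :=
              Finset.card_le_card hsub2
          _ ≤ (D.filter (fun s => e s = n)).card + 1 := Finset.card_insert_le _ _
          _ ≤ 2 := by omega
      have hsplit : D.card ≤ Dbig.card + (D \ Dbig).card := by
        have : Dbig ⊆ D := Finset.filter_subset _ _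
        rw [Finset.card_sdiff_of_subset this]
        omega
      omega
    have hbig : M * Dbig.card ≤ ∑ x ∈ D.attach, (e x.1 + 1 - x.1) := by
      have h1 : M * Dbig.card ≤ ∑ s ∈ Dbig, (e s + 1 - s) := by
        rw [mul_comm]
        apply Finset.card_nsmul_le_sum
        intro s hs
        rw [hDbig, Finset.mem_filter] at hs
        exact hlen s hs.1 hs.2.1 hs.2.2
      have h2 : ∑ s ∈ Dbig, (e s + 1 - s) ≤ ∑ s ∈ D, (e s + 1 - s) :=
        Finset.sum_le_sum_of_subset (Finset.filter_subset _ _)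
      have h3 : ∑ s ∈ D, (e s + 1 - s) = ∑ x ∈ D.attach, (e x.1 + 1 - x.1) :=
        (Finset.sum_attach D (fun s => e s + 1 - s)).symm
      omega
    have hcast : ((∑ x ∈ D.attach, (e x.1 + 1 - x.1) : ℕ) : ℝ) = Sum1 := by
      rw [hSum1, Nat.cast_sum]
      apply Finset.sum_congr rfl
      intro x _
      have := he1 x.1
      push_cast [Nat.cast_sub (show x.1 ≤ e x.1 + 1 by omega)]
      ring
    have h4 : (M:ℝ) * Dbig.card ≤ Sum1 := by
      rw [← hcast]
      exact_mod_cast hbig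
    have h5 : (D.card : ℝ) ≤ (Dbig.card : ℝ) + 2 := by exact_mod_cast hsmall
    nlinarith [hMpos]
  -- final arithmetic
  have hDle : (D.card : ℝ) ≤ (n:ℝ)/M + 2 := by
    rw [show (n:ℝ)/M + 2 = ((n:ℝ) + 2*M)/M by field_simp, le_div_iff₀ hMpos]
    linarith [hDcard, hSum1_le]
  have hKSum : K * c * n ≤ K * Sum1 := by
    calc K * c * n = K * (c * n) := by ring
      _ ≤ K * Sum1 := mul_le_mul_of_nonneg_left hSum1_ge hKpos.le
  have hSdiv : Sum1/M' ≤ (n:ℝ)/M' := (div_le_div_iff_of_pos_right hM'pos).mpr hSum1_le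
  have hBM' : B * M' = ((M':ℝ)+1)*M' + ((M:ℝ) - 1) := by
    rw [hB]
    field_simp
    try ring
  have hcastMM' : (M':ℝ) * (2*M'+1) ≤ M := by exact_mod_cast hMM'
  have hBM'le : B * M' ≤ 2 * M := by nlinarith [hM'pos, hMpos]
  have hDB : (D.card : ℝ) * B ≤ ((n:ℝ)/M + 2) * B := mul_le_mul_of_nonneg_right hDle hBnn
  have hnB : ((n:ℝ)/M) * B ≤ 2*(n:ℝ)/M' := by
    rw [div_mul_eq_mul_div, div_le_div_iff₀ hMpos hM'pos]
    have hn0 : (0:ℝ) ≤ n := Nat.cast_nonneg n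
    nlinarith [hBM'le]
  have h2B : 2 * B ≤ 2*((M':ℝ)+1) + 2*(M:ℝ)/M' := by
    rw [hB]
    have key : 2*(M:ℝ)/M' - 2*(((M:ℝ)-1)/M') = 2/M' := by field_simp; ring
    have pos : (0:ℝ) ≤ 2/(M':ℝ) := by positivity
    linarith [key, pos]
  have hexpand : ((n:ℝ)/M + 2) * B = ((n:ℝ)/M) * B + 2*B := by ring
  calc K * c * n - 3*(n:ℝ)/M' - (2*((M':ℝ)+1) + 2*(M:ℝ)/M')
      ≤ K * Sum1 - Sum1/M' - (D.card : ℝ) * B := by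
        have k1 : 3*(n:ℝ)/M' = (n:ℝ)/M' + 2*(n:ℝ)/M' := by ring
        linarith [hKSum, hSdiv, hDB, hnB, h2B, hexpand, k1]
    _ ≤ (GF.card : ℝ) := hGFlow
    _ ≤ _ := hGFcard



lemma densN_eq (E : Set ℕ) (n : ℕ) : densN E n = ((E ∩ Set.Icc 1 n).ncard : ℝ) / n := by
  rw [densN, Nat.card_coe_set_eq]

lemma densN_nonneg (E : Set ℕ) (n : ℕ) : 0 ≤ densN E n := by
  rw [densN]; positivity

lemma ncard_inter_Icc_le (E : Set ℕ) (n : ℕ) : (E ∩ Set.Icc 1 n).ncard ≤ n := by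
  have h1 : (E ∩ Set.Icc 1 n).ncard ≤ (Set.Icc 1 n).ncard :=
    Set.ncard_le_ncard Set.inter_subset_right (Set.finite_Icc 1 n)
  have h2 : (Set.Icc (1:ℕ) n).ncard = n := by
    rw [← Finset.coe_Icc, Set.ncard_coe_finset, Nat.card_Icc]
    omega
  omega

lemma densN_le_one (E : Set ℕ) (n : ℕ) : densN E n ≤ 1 := by
  rcases Nat.eq_zero_or_pos n with h | h
  · subst h; simp [densN]
  · rw [densN_eq, div_le_one (by exact_mod_cast h)]
    exact_mod_cast ncard_inter_Icc_le E n

lemma densN_mono {E F : Set ℕ} (h : E ⊆ F) (n : ℕ) : densN E n ≤ densN F n := by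
  rcases Nat.eq_zero_or_pos n with h0 | h0
  · subst h0; simp [densN]
  · rw [densN_eq, densN_eq]
    apply (div_le_div_iff_of_pos_right (show (0:ℝ) < n by exact_mod_cast h0)).mpr
    exact_mod_cast Set.ncard_le_ncard (Set.inter_subset_inter_left _ h)
      ((Set.finite_Icc 1 n).subset Set.inter_subset_right)

lemma densN_inter_ge (E F : Set ℕ) (n : ℕ) :
    densN E n + densN F n - 1 ≤ densN (E ∩ F) n := by
  rcases Nat.eq_zero_or_pos n with h0 | h0
  · subst h0; simp [densN]
  · have hfin : (E ∩ Set.Icc 1 n).Finite := (Set.finite_Icc 1 n).subset Set.inter_subset_right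
    have hfin' : (F ∩ Set.Icc 1 n).Finite := (Set.finite_Icc 1 n).subset Set.inter_subset_right
    have hkey := Set.ncard_inter_add_ncard_union (E ∩ Set.Icc 1 n) (F ∩ Set.Icc 1 n) hfin hfin'
    have hseteq : (E ∩ Set.Icc 1 n) ∩ (F ∩ Set.Icc 1 n) = (E ∩ F) ∩ Set.Icc 1 n := by
      ext z; simp only [Set.mem_inter_iff]; tauto
    have hunion : ((E ∩ Set.Icc 1 n) ∪ (F ∩ Set.Icc 1 n)).ncard ≤ n := by
      have hsub : (E ∩ Set.Icc 1 n) ∪ (F ∩ Set.Icc 1 n) ⊆ Set.Icc 1 n := by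
        intro z hz; rcases hz with hz | hz <;> exact hz.2
      have h2 : (Set.Icc (1:ℕ) n).ncard = n := by
        rw [← Finset.coe_Icc, Set.ncard_coe_finset, Nat.card_Icc]; omega
      have := Set.ncard_le_ncard hsub (Set.finite_Icc 1 n)
      omega
    rw [hseteq] at hkey
    have hineq : (E ∩ Set.Icc 1 n).ncard + (F ∩ Set.Icc 1 n).ncard
        ≤ ((E ∩ F) ∩ Set.Icc 1 n).ncard + n := by omega
    have hnpos : (0:ℝ) < n := by exact_mod_cast h0
    have hstep : (((E ∩ Set.Icc 1 n).ncard : ℝ) + ((F ∩ Set.Icc 1 n).ncard : ℝ)) / n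
        ≤ ((((E ∩ F) ∩ Set.Icc 1 n).ncard : ℝ) + (n:ℝ)) / n := by
      apply (div_le_div_iff_of_pos_right hnpos).mpr
      exact_mod_cast hineq
    have hsplit1 : ((((E ∩ F) ∩ Set.Icc 1 n).ncard : ℝ) + (n:ℝ)) / n
        = (((E ∩ F) ∩ Set.Icc 1 n).ncard : ℝ) / n + 1 := by
      field_simp
    have hsplit2 : (((E ∩ Set.Icc 1 n).ncard : ℝ) + ((F ∩ Set.Icc 1 n).ncard : ℝ)) / n
        = ((E ∩ Set.Icc 1 n).ncard : ℝ)/n + ((F ∩ Set.Icc 1 n).ncard : ℝ)/n := add_div _ _ _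
    rw [densN_eq, densN_eq, densN_eq]
    linarith

lemma densN_bddAbove (E : Set ℕ) :
    Filter.IsBoundedUnder (· ≤ ·) atTop (fun n => densN E n) :=
  isBoundedUnder_of ⟨1, fun n => densN_le_one E n⟩

lemma densN_bddBelow (E : Set ℕ) :
    Filter.IsBoundedUnder (· ≥ ·) atTop (fun n => densN E n) :=
  isBoundedUnder_of ⟨0, fun n => densN_nonneg E n⟩

lemma upperDens_nonneg (E : Set ℕ) : 0 ≤ upperDens E :=
  le_limsup_of_frequently_le (Frequently.of_forall fun n => densN_nonneg E n)
    (densN_bddAbove E)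

lemma upperDens_le_one (E : Set ℕ) : upperDens E ≤ 1 :=
  limsup_le_of_le ((densN_bddBelow E).isCoboundedUnder_le)
    (Eventually.of_forall (densN_le_one E))

lemma Ehyp_anti {a : ℕ → ℝ} {δ δ' : ℝ} (h : δ ≤ δ') : Ehyp a δ' ⊆ Ehyp a δ := by
  intro p hp
  refine ⟨hp.1, fun k hk => le_trans ?_ (hp.2 k hk)⟩
  have hpk : (0:ℝ) ≤ (p:ℝ) - k := by
    have : (k:ℝ) ≤ p := by exact_mod_cast le_of_lt hk
    linarith
  exact mul_le_mul_of_nonneg_left h hpk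

lemma EM_mono {E F : Set ℕ} (h : E ⊆ F) (M : ℕ) : EM E M ⊆ EM F M := by
  rintro k ⟨m, h1, h2, h3⟩
  exact ⟨m, h1, h2, h h3⟩

set_option maxHeartbeats 1600000 in
theorem statement16' {X : Type*} [MetricSpace X] [CompactSpace X]
    [MeasurableSpace X] [BorelSpace X] (T : X ≃ₜ X)
    (φ ψ : X → ℝ) (hφ : Continuous φ) (hψ : Continuous ψ) (x : X)
    (h1 : lowerDphi T φ x = 1)
    (h2 : 0 < upDplus fun n => -ψ ((⇑T)^[n] x)) :
    ∃ δ lam : ℚ, 0 < δ ∧ 0 < lam ∧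
      (lam : ℝ) < ⨆ P : ℕ, Filter.atTop.liminf fun M =>
        upperDens (Gmild (fun n => -ψ ((⇑T)^[n] x)) (δ : ℝ) M ∩
          EM (Ehyp (Phi T φ x) (δ : ℝ)) P) := by
  classical
  set a : ℕ → ℝ := fun n => -ψ ((⇑T)^[n] x) with ha
  set Φ : ℕ → ℝ := Phi T φ x with hΦ
  -- uniform bound on a
  obtain ⟨z, -, hz'⟩ := IsCompact.exists_isMaxOn isCompact_univ ⟨x, Set.mem_univ x⟩
    ((continuous_abs.comp hψ).continuousOn)
  have hz : ∀ y, |ψ y| ≤ |ψ z| := fun y => hz' (Set.mem_univ y)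
  set A : ℝ := |ψ z| + 1 with hA'
  clear_value A
  have hA : 0 < A := by rw [hA']; positivity
  have hbound : ∀ l, a l ≤ A - 1 := by
    intro l
    have h1' : a l ≤ |ψ ((⇑T)^[l] x)| := by
      rw [ha]; exact neg_le_abs _
    have h2' := hz ((⇑T)^[l] x)
    rw [hA']
    linarith
  -- unpack h2
  obtain ⟨y₀, hy₀⟩ : ∃ y : Set.Ioi (0:ℝ),
      0 < atTop.limsup (fun M => upperDens (EM (Fweak a y.1 M) M)) := by
    by_contra hcon
    push_neg at hcon
    have : upDplus a ≤ 0 := Real.iSup_le (fun y => hcon y) le_rfl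
    linarith [h2]
  set δ₀ : ℝ := y₀.1 with hδ₀def
  have hδ₀pos : 0 < δ₀ := by rw [hδ₀def]; exact y₀.2
  set L0 : ℝ := atTop.limsup (fun M => upperDens (EM (Fweak a δ₀ M) M)) with hL0def
  set c : ℝ := L0 / 2 with hcdef
  clear_value c
  have hcpos : 0 < c := by rw [hcdef]; linarith [hy₀]
  have hcL0 : c < L0 := by rw [hcdef]; linarith [hy₀]
  set μ : ℝ := (δ₀/(2*A)) * c / 4 with hμdef
  clear_value μ
  have hμpos : 0 < μ := by rw [hμdef]; positivity
  set ε : ℝ := min (μ/2) (1/2) with hεdef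
  clear_value ε
  have hεpos : 0 < ε := by rw [hεdef]; positivity
  have hεμ : ε ≤ μ/2 := by rw [hεdef]; exact min_le_left _ _
  have hεhalf : ε ≤ 1/2 := by rw [hεdef]; exact min_le_right _ _
  -- unpack h1
  obtain ⟨δ₁, hδ₁pos, P, hP⟩ : ∃ δ₁ : ℝ, 0 < δ₁ ∧ ∃ P : ℕ,
      1 - ε < lowerDens (EM (Ehyp Φ δ₁) P) := by
    by_contra hcon
    push_neg at hcon
    have hle : lowerDphi T φ x ≤ 1 - ε := by
      rw [lowerDphi]
      apply Real.iSup_le _ (by linarith)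
      intro y
      apply Real.iSup_le _ (by linarith)
      intro P
      exact hcon y.1 y.2 P
    rw [h1] at hle
    linarith
  -- rational choices
  have hminpos : (0:ℝ) < min (δ₀/2) δ₁ := by
    apply lt_min (by linarith) hδ₁pos
  obtain ⟨δq, hq1, hq2⟩ := exists_rat_btwn hminpos
  have hδqpos : (0:ℝ) < (δq:ℝ) := hq1
  have hδqQ : (0:ℚ) < δq := by exact_mod_cast hq1
  have h2δq : 2*(δq:ℝ) ≤ δ₀ := by
    have := lt_of_lt_of_le hq2 (min_le_left _ _)
    linarith
  have hδqδ₁ : (δq:ℝ) ≤ δ₁ := le_of_lt (lt_of_lt_of_le hq2 (min_le_right _ _))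
  obtain ⟨lamq, hl1, hl2⟩ := exists_rat_btwn (show (0:ℝ) < μ/2 by positivity)
  have hlamQ : (0:ℚ) < lamq := by exact_mod_cast hl1
  refine ⟨δq, lamq, hδqQ, hlamQ, ?_⟩
  -- the step bound for the rational rate
  have hstepδ : ∀ l, a l - (δq:ℝ) ≤ A := by
    intro l
    have := hbound l
    linarith
  -- frequently many good window sizes M
  have hbb1 : IsBoundedUnder (· ≥ ·) atTop (fun M => upperDens (EM (Fweak a δ₀ M) M)) :=
    isBoundedUnder_of ⟨0, fun M => upperDens_nonneg _⟩
  have hfreqM : ∃ᶠ M in atTop, c < upperDens (EM (Fweak a δ₀ M) M) :=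
    frequently_lt_of_lt_limsup hbb1.isCoboundedUnder_le hcL0
  rw [frequently_atTop] at hfreqM
  -- eventual density of hyperbolic times of φ
  have hev : ∀ᶠ m in atTop, 1 - ε < densN (EM (Ehyp Φ δ₁) P) m :=
    eventually_lt_of_lt_liminf hP (densN_bddBelow _)
  rw [eventually_atTop] at hev
  obtain ⟨m₀, hm₀⟩ := hev
  -- the threshold for M'
  set N₀ : ℕ := ⌈3/μ⌉₊ + 1 with hN₀def
  clear_value N₀
  -- main liminf bound
  have hmain : μ/2 ≤ atTop.liminf fun M =>
      upperDens (Gmild a (δq:ℝ) M ∩ EM (Ehyp Φ (δq:ℝ)) P) := by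
    apply le_liminf_of_le
    · have hbb2 : IsBoundedUnder (· ≤ ·) atTop (fun M =>
          upperDens (Gmild a (δq:ℝ) M ∩ EM (Ehyp Φ (δq:ℝ)) P)) :=
        isBoundedUnder_of ⟨1, fun M => upperDens_le_one _⟩
      exact hbb2.isCoboundedUnder_ge
    · rw [eventually_atTop]
      refine ⟨N₀, fun M' hM' => ?_⟩
      have hM'1 : 1 ≤ M' := by omega
      have hM'r : 3/μ ≤ (M':ℝ) := by
        have h3 : (3/μ) ≤ (⌈3/μ⌉₊ : ℝ) := Nat.le_ceil _
        have h4 : ((⌈3/μ⌉₊ : ℕ) : ℝ) ≤ (M' : ℝ) := by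
          have : ⌈3/μ⌉₊ ≤ N₀ := by rw [hN₀def]; omega
          exact_mod_cast le_trans this hM'
        linarith
      have hM'pos : (0:ℝ) < M' := by exact_mod_cast hM'1
      have h3M' : 3/(M':ℝ) ≤ μ := by
        rw [div_le_iff₀ hM'pos]
        rw [div_le_iff₀ hμpos] at hM'r
        linarith
      -- choose a good M
      obtain ⟨M, hMge, hMgood⟩ := hfreqM (max (M'*(2*M'+1)) 1)
      have hMM' : M'*(2*M'+1) ≤ M := le_trans (le_max_left _ _) hMge
      have hM1 : 1 ≤ M := le_trans (le_max_right _ _) hMge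
      set CB : ℝ := 2*((M':ℝ)+1) + 2*(M:ℝ)/M' with hCBdef
      clear_value CB
      have hCBnn : 0 ≤ CB := by
        rw [hCBdef]; positivity
      set NN : ℕ := ⌈(CB + μ*M)/(2*μ)⌉₊ with hNNdef
      clear_value NN
      -- frequent good scales n
      have hfreqn : ∃ᶠ nn in atTop, c < densN (EM (Fweak a δ₀ M) M) nn :=
        frequently_lt_of_lt_limsup
          ((densN_bddBelow _).isCoboundedUnder_le) hMgood
      rw [frequently_atTop] at hfreqn
      have hfinal : μ - ε ≤ upperDens (Gmild a (δq:ℝ) M' ∩ EM (Ehyp Φ (δq:ℝ)) P) := by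
        apply le_limsup_of_frequently_le _ (densN_bddAbove _)
        rw [frequently_atTop]
        intro b
        obtain ⟨n, hnge, hngood⟩ := hfreqn (max (max b m₀) (max NN 1))
        have hn1 : 1 ≤ n := le_trans (le_trans (le_max_right _ _) (le_max_right _ _)) hnge
        have hnb : b ≤ n := le_trans (le_trans (le_max_left _ _) (le_max_left _ _)) hnge
        have hnm₀ : m₀ ≤ n := le_trans (le_trans (le_max_right _ _) (le_max_left _ _)) hnge
        have hnNN : NN ≤ n := le_trans (le_trans (le_max_left _ _) (le_max_right _ _)) hnge
        refine ⟨n + M, by omega, ?_⟩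
        have hnpos : (0:ℝ) < n := by exact_mod_cast hn1
        -- c * n ≤ ncard
        have hcn : c * n ≤ ((EM (Fweak a δ₀ M) M ∩ Set.Icc 1 n).ncard : ℝ) := by
          rw [densN_eq] at hngood
          rw [lt_div_iff₀ hnpos] at hngood
          linarith
        -- apply the global counting lemma
        have hG := globalCount A hA hδqpos h2δq hstepδ hM'1 hMM' n hn1 c hcn
        -- density of G at n + M
        have hnMpos : (0:ℝ) < ((n + M : ℕ):ℝ) := by
          have : (1:ℕ) ≤ n + M := by omega
          exact_mod_cast this
        have hNNr : (CB + μ*M)/(2*μ) ≤ (n:ℝ) := by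
          have h3 : (CB + μ*M)/(2*μ) ≤ (NN : ℝ) := by
            rw [hNNdef]; exact Nat.le_ceil _
          have h4 : ((NN:ℕ):ℝ) ≤ (n:ℝ) := by exact_mod_cast hnNN
          linarith
        have hCBμ : CB + μ*M ≤ 2*μ*n := by
          rw [div_le_iff₀ (by positivity)] at hNNr
          linarith
        have h3nM' : 3*(n:ℝ)/M' ≤ μ*n := by
          have heq : 3*(n:ℝ)/M' = (3/(M':ℝ))*n := by ring
          rw [heq]
          exact mul_le_mul_of_nonneg_right h3M' (le_of_lt hnpos)
        have hKc : (δ₀/(2*A))*c*n = 4*μ*n := by rw [hμdef]; ring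
        have hncard : μ * ((n:ℝ) + M)
            ≤ ((Gmild a (δq:ℝ) M' ∩ Set.Icc 1 (n+M)).ncard : ℝ) := by
          have : μ * ((n:ℝ) + M) ≤ (δ₀/(2*A))*c*n - 3*(n:ℝ)/M' - CB := by
            rw [hKc]
            linarith
          calc μ * ((n:ℝ) + M) ≤ (δ₀/(2*A))*c*n - 3*(n:ℝ)/M' - CB := this
            _ ≤ _ := by rw [hCBdef]; exact hG
        have hdG : μ ≤ densN (Gmild a (δq:ℝ) M') (n+M) := by
          rw [densN_eq, le_div_iff₀ hnMpos]
          have hcast : ((n + M : ℕ):ℝ) = (n:ℝ) + M := by push_cast; ring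
          rw [hcast]
          exact hncard
        have hdE : 1 - ε < densN (EM (Ehyp Φ (δq:ℝ)) P) (n+M) := by
          have h5 := hm₀ (n+M) (by omega)
          have h6 : densN (EM (Ehyp Φ δ₁) P) (n+M)
              ≤ densN (EM (Ehyp Φ (δq:ℝ)) P) (n+M) :=
            densN_mono (EM_mono (Ehyp_anti hδqδ₁) P) (n+M)
          linarith
        have h7 := densN_inter_ge (Gmild a (δq:ℝ) M') (EM (Ehyp Φ (δq:ℝ)) P) (n+M)
        linarith
      linarith [hfinal, hεμ]
  -- conclude via the supremum
  have hbddrange : BddAbove (Set.range fun P' : ℕ => atTop.liminf fun M =>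
      upperDens (Gmild a (δq:ℝ) M ∩ EM (Ehyp Φ (δq:ℝ)) P')) := by
    refine ⟨1, ?_⟩
    rintro v ⟨P', rfl⟩
    exact liminf_le_of_frequently_le
      (Frequently.of_forall fun M => upperDens_le_one _)
      (isBoundedUnder_of ⟨0, fun M => upperDens_nonneg _⟩)
  have hsup := le_ciSup hbddrange P
  calc (lamq:ℝ) < μ/2 := hl2
    _ ≤ atTop.liminf fun M => upperDens (Gmild a (δq:ℝ) M ∩ EM (Ehyp Φ (δq:ℝ)) P) := hmain
    _ ≤ _ := hsup

end SRB

namespace SRB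

/-- if `underline-d_φ(x) = 1` and
`lim_{δ→0⁺} limsup_M d̄(F_{−Ψ_x}^{δ,M}(M)) > 0`, then there are rationals `δ, λ > 0` with
`lim_P liminf_M d̄(G^{δ,M}_{−Ψ_x} ∩ E^δ_{Φ_x}(P)) > λ` (the limit in `P` being nondecreasing,
it is the supremum over `P`). -/
theorem statement16 {X : Type*} [MetricSpace X] [CompactSpace X]
    [MeasurableSpace X] [BorelSpace X] (T : X ≃ₜ X)
    (φ ψ : X → ℝ) (hφ : Continuous φ) (hψ : Continuous ψ) (x : X)
    (h1 : lowerDphi T φ x = 1)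
    (h2 : 0 < upDplus fun n => -ψ ((⇑T)^[n] x)) :
    ∃ δ lam : ℚ, 0 < δ ∧ 0 < lam ∧
      (lam : ℝ) < ⨆ P : ℕ, Filter.atTop.liminf fun M =>
        upperDens (Gmild (fun n => -ψ ((⇑T)^[n] x)) (δ : ℝ) M ∩
          EM (Ehyp (Phi T φ x) (δ : ℝ)) P) := by
  exact statement16' T φ ψ hφ hψ x h1 h2

end SRB
end
end

section
/- Let (X,d) be a compact metric space, T : X → X a homeomorphism, μ a T-invariant ergodic Borel probability measure on X, φ : X → ℝ continuous, and δ ∈ ℝ with ∫ φ dμ > δ. Then μ(H_δ) > 0, where H_δ := {x ∈ X : Σ_{1≤j≤m} φ(T^{−j} x) > mδ for every integer m ≥ 1}. -/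
open MeasureTheory Filter Topology
open scoped ENNReal

noncomputable section

set_option linter.unusedSectionVars false
namespace SRBAux

variable {X : Type*} [MetricSpace X] [CompactSpace X] [MeasurableSpace X] [BorelSpace X]

lemma cont_integrable (μ : Measure X) [IsProbabilityMeasure μ] {f : X → ℝ}
    (hf : Continuous f) : Integrable f μ :=
  hf.integrable_of_hasCompactSupport (HasCompactSupport.of_compactSpace f)

/-- running maximum of Birkhoff sums -/
def maxB (S : X → X) (h : X → ℝ) (N : ℕ) (x : X) : ℝ :=
  (Finset.range (N + 1)).sup' Finset.nonempty_range_add_one fun m => birkhoffSum S h m x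

lemma maxB_nonneg (S : X → X) (h : X → ℝ) (N : ℕ) (x : X) : 0 ≤ maxB S h N x := by
  have := Finset.le_sup' (f := fun m => birkhoffSum S h m x)
    (Finset.mem_range.2 (Nat.succ_pos N))
  simpa only [maxB, birkhoffSum_zero, Pi.zero_apply] using this

lemma birkhoff_le_maxB (S : X → X) (h : X → ℝ) {m N : ℕ} (hm : m ≤ N) (x : X) :
    birkhoffSum S h m x ≤ maxB S h N x := by
  rw [maxB]
  exact Finset.le_sup' (fun m => birkhoffSum S h m x) (Finset.mem_range.2 (Nat.lt_succ_of_le hm))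

lemma maxB_continuous {S : X → X} (hS : Continuous S) {h : X → ℝ} (hh : Continuous h)
    (N : ℕ) : Continuous (maxB S h N) := by
  apply Continuous.finset_sup'_apply
  intro m _
  exact continuous_finset_sum _ fun k _ => hh.comp (hS.iterate k)

lemma maxB_mono (S : X → X) (h : X → ℝ) {N N' : ℕ} (hN : N ≤ N') (x : X) :
    maxB S h N x ≤ maxB S h N' x :=
  Finset.sup'_mono _ (Finset.range_subset_range.2 (by omega)) _

lemma maxB_key (S : X → X) (h : X → ℝ) (N : ℕ) {x : X} (hx : 0 < maxB S h N x) :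
    maxB S h N x ≤ h x + maxB S h N (S x) := by
  obtain ⟨m, hmmem, hm⟩ := Finset.exists_mem_eq_sup' (s := Finset.range (N + 1))
    Finset.nonempty_range_add_one (fun m => birkhoffSum S h m x)
  rw [maxB] at hx ⊢
  rw [hm] at hx ⊢
  rcases m with _ | m
  · simp at hx
  · rw [birkhoffSum_succ' S h m x]
    have hmN : m ≤ N := Nat.le_of_succ_le (Nat.lt_succ_iff.mp (Finset.mem_range.mp hmmem))
    have : birkhoffSum S h m (S x) ≤ maxB S h N (S x) := birkhoff_le_maxB S h hmN (S x)
    linarith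

/-- Hopf's maximal ergodic lemma (finite version, continuous case). -/
lemma hopf (μ : Measure X) [IsProbabilityMeasure μ] (S : X ≃ₜ X)
    (hS : MeasurePreserving (⇑S) μ μ) {h : X → ℝ} (hh : Continuous h) (N : ℕ) :
    0 ≤ ∫ x in {x | 0 < maxB (⇑S) h N x}, h x ∂μ := by
  set F := maxB (⇑S) h N with hF
  have hFc : Continuous F := maxB_continuous S.continuous hh N
  set E := {x | 0 < F x} with hEdef
  have hE : MeasurableSet E := (isOpen_lt continuous_const hFc).measurableSet
  have hinth : Integrable h μ := cont_integrable μ hh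
  have hintF : Integrable F μ := cont_integrable μ hFc
  have hintFS : Integrable (fun x => F (S x)) μ := cont_integrable μ (hFc.comp S.continuous)
  have h1 : ∫ x in E, (F x - F (S x)) ∂μ ≤ ∫ x in E, h x ∂μ := by
    apply setIntegral_mono_on (hintF.sub hintFS).integrableOn hinth.integrableOn hE
    intro x hx
    have := maxB_key (⇑S) h N hx
    simp only [Pi.sub_apply]
    linarith
  have h2 : ∫ x in Eᶜ, (F x - F (S x)) ∂μ ≤ 0 := by
    apply setIntegral_nonpos hE.compl
    intro x hx
    have h0 : F x = 0 := le_antisymm (not_lt.mp hx) (maxB_nonneg _ _ _ _)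
    have := maxB_nonneg (⇑S) h N (S x)
    simp only [h0]
    linarith
  have h3 : ∫ x, (F x - F (S x)) ∂μ = 0 := by
    rw [integral_sub hintF hintFS,
      MeasurePreserving.integral_comp hS (S.measurableEmbedding) F, sub_self]
  have h4 : ∫ x in E, (F x - F (S x)) ∂μ + ∫ x in Eᶜ, (F x - F (S x)) ∂μ
      = ∫ x, (F x - F (S x)) ∂μ := integral_add_compl hE (hintF.sub hintFS)
  linarith

end SRBAux

namespace SRB

/-- for an ergodic `T`-invariant probability measure `μ`, a continuous
`φ : X → ℝ` and `δ ∈ ℝ` with `∫ φ dμ > δ`, one has `μ(H_δ) > 0` where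
`H_δ = {x | ∑_{1≤j≤m} φ(T^{−j} x) > mδ for every m ≥ 1}`. -/
theorem statement19 {X : Type*} [MetricSpace X] [CompactSpace X]
    [MeasurableSpace X] [BorelSpace X] (T : X ≃ₜ X)
    (μ : Measure X) [IsProbabilityMeasure μ] (hT : Ergodic (⇑T) μ)
    (φ : X → ℝ) (hφ : Continuous φ) (δ : ℝ) (hδ : δ < ∫ y, φ y ∂μ) :
    0 < μ {x | ∀ m : ℕ, 1 ≤ m →
      (m : ℝ) * δ < ∑ j ∈ Finset.Icc 1 m, φ ((⇑T.symm)^[j] x)} := by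
  classical
  -- `T.symm` preserves `μ`
  have hTmp : MeasurePreserving (⇑T.toMeasurableEquiv) μ μ := hT.toMeasurePreserving
  have hSmp : MeasurePreserving (⇑T.symm) μ μ := hTmp.symm T.toMeasurableEquiv
  set ψ : X → ℝ := fun y => φ (T.symm y) with hψdef
  have hψc : Continuous ψ := hφ.comp T.symm.continuous
  have hIψ : ∫ y, ψ y ∂μ = ∫ y, φ y ∂μ :=
    hSmp.integral_comp T.symm.measurableEmbedding φ
  set ε : ℝ := ((∫ y, φ y ∂μ) - δ) / 2 with hεdef
  have hε : 0 < ε := by rw [hεdef]; linarith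
  set h : X → ℝ := fun y => (δ + ε) - ψ y with hhdef
  have hhc : Continuous h := continuous_const.sub hψc
  have hbsc : ∀ m : ℕ, Continuous (fun x => birkhoffSum (⇑T.symm) h m x) := by
    intro m
    exact continuous_finset_sum _ fun k _ => hhc.comp (T.symm.continuous.iterate k)
  have hbs : ∀ (m : ℕ) (x : X),
      birkhoffSum (⇑T.symm) h m x = m * (δ + ε) - birkhoffSum (⇑T.symm) ψ m x := by
    intro m x
    simp [birkhoffSum, hhdef, Finset.sum_sub_distrib, mul_add]
  have hsum : ∀ (m : ℕ) (x : X),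
      birkhoffSum (⇑T.symm) ψ m x = ∑ j ∈ Finset.Icc 1 m, φ ((⇑T.symm)^[j] x) := by
    intro m x
    rw [← Finset.Ico_add_one_right_eq_Icc, Finset.sum_Ico_eq_sum_range]
    simp only [Nat.succ_sub_one, Nat.add_sub_cancel, birkhoffSum]
    apply Finset.sum_congr rfl
    intro k _
    rw [show 1 + k = k + 1 by omega, Function.iterate_succ_apply']
  set H : Set X := {x | ∀ m : ℕ, 1 ≤ m → birkhoffSum (⇑T.symm) h m x ≤ 0} with hHdef
  have hHsub : H ⊆ {x | ∀ m : ℕ, 1 ≤ m →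
      (m : ℝ) * δ < ∑ j ∈ Finset.Icc 1 m, φ ((⇑T.symm)^[j] x)} := by
    intro x hx m hm
    have h1 := hx m hm
    rw [hbs] at h1
    rw [← hsum]
    have hm1 : (1 : ℝ) ≤ (m : ℝ) := by exact_mod_cast hm
    nlinarith
  have hHmeas : MeasurableSet H := by
    have : H = ⋂ m : ℕ, {x | 1 ≤ m → birkhoffSum (⇑T.symm) h m x ≤ 0} := by
      ext x; simp [hHdef]
    rw [this]
    refine MeasurableSet.iInter fun m => ?_
    by_cases hm : 1 ≤ m
    · have : {x | 1 ≤ m → birkhoffSum (⇑T.symm) h m x ≤ 0}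
          = {x | birkhoffSum (⇑T.symm) h m x ≤ 0} := by
        ext x; simp [hm]
      rw [this]
      exact (isClosed_le (hbsc m) continuous_const).measurableSet
    · have : {x | 1 ≤ m → birkhoffSum (⇑T.symm) h m x ≤ 0} = Set.univ := by
        ext x; simp [hm]
      rw [this]; exact MeasurableSet.univ
  refine lt_of_lt_of_le ?_ (measure_mono hHsub)
  by_contra hcon
  have hH0 : μ H = 0 := le_zero_iff.mp (not_lt.mp hcon)
  set E : ℕ → Set X := fun N => {x | 0 < SRBAux.maxB (⇑T.symm) h N x} with hEdef
  have hEmeas : ∀ N, MeasurableSet (E N) := fun N =>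
    (isOpen_lt continuous_const (SRBAux.maxB_continuous T.symm.continuous hhc N)).measurableSet
  have hEmono : Monotone E := fun N N' hNN' x hx =>
    lt_of_lt_of_le hx (SRBAux.maxB_mono _ _ hNN' x)
  have hEunion : ⋃ N, E N = Hᶜ := by
    ext x
    simp only [Set.mem_iUnion, hEdef, Set.mem_setOf_eq, Set.mem_compl_iff, hHdef,
      not_forall, not_le, Classical.not_imp]
    constructor
    · rintro ⟨N, hN⟩
      obtain ⟨m, hmmem, hm⟩ := Finset.exists_mem_eq_sup' (s := Finset.range (N + 1))
        Finset.nonempty_range_add_one (fun m => birkhoffSum (⇑T.symm) h m x)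
      rw [SRBAux.maxB, hm] at hN
      rcases m with _ | m
      · simp at hN
      · exact ⟨m + 1, Nat.succ_le_succ (Nat.zero_le m), hN⟩
    · rintro ⟨m, hm1, hm⟩
      exact ⟨m, lt_of_lt_of_le hm (SRBAux.birkhoff_le_maxB _ _ le_rfl x)⟩
  have hμE : Tendsto (fun N => μ (E N)) atTop (𝓝 (μ (⋃ N, E N))) :=
    tendsto_measure_iUnion_atTop hEmono
  rw [hEunion] at hμE
  have hcompl : μ Hᶜ = 1 := by
    rw [measure_compl hHmeas (measure_ne_top μ H), hH0, measure_univ]; simp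
  rw [hcompl] at hμE
  have htoReal : Tendsto (fun N => (μ (E N)).toReal) atTop (𝓝 1) := by
    have := (ENNReal.tendsto_toReal (by norm_num : (1 : ℝ≥0∞) ≠ ⊤)).comp hμE
    exact this
  have hcomplE : ∀ N, (μ (E N)ᶜ).toReal = 1 - (μ (E N)).toReal := by
    intro N
    rw [measure_compl (hEmeas N) (measure_ne_top μ _), measure_univ,
      ENNReal.toReal_sub_of_le prob_le_one (by norm_num)]
    simp
  have htend0 : Tendsto (fun N => (μ (E N)ᶜ).toReal) atTop (𝓝 0) := by
    have h1 : Tendsto (fun N => 1 - (μ (E N)).toReal) atTop (𝓝 (1 - 1)) :=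
      htoReal.const_sub 1
    simp only [sub_self] at h1
    exact h1.congr fun N => (hcomplE N).symm
  obtain ⟨C, hC⟩ := isCompact_univ.exists_bound_of_continuousOn hhc.continuousOn
  have hinth : Integrable h μ := SRBAux.cont_integrable μ hhc
  have hIh : ∫ y, h y ∂μ = -ε := by
    rw [hhdef]
    rw [integral_sub (integrable_const _) (SRBAux.cont_integrable μ hψc), hIψ,
      integral_const, measureReal_def, measure_univ]
    simp only [ENNReal.toReal_one, one_smul, smul_eq_mul]
    rw [hεdef]; ring
  have hkey : ∀ N, ε ≤ C * (μ (E N)ᶜ).toReal := by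
    intro N
    have h1 : 0 ≤ ∫ x in E N, h x ∂μ := SRBAux.hopf μ T.symm hSmp hhc N
    have h2 : ‖∫ x in (E N)ᶜ, h x ∂μ‖ ≤ C * (μ (E N)ᶜ).toReal :=
      norm_setIntegral_le_of_norm_le_const (measure_lt_top μ _)
        (fun x _ => hC x (Set.mem_univ x))
    have h3 : (∫ x in E N, h x ∂μ) + ∫ x in (E N)ᶜ, h x ∂μ = ∫ x, h x ∂μ :=
      integral_add_compl (hEmeas N) hinth
    rw [hIh] at h3
    have h4 := abs_le.mp (by rwa [Real.norm_eq_abs] at h2)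
    linarith [h4.1, h4.2]
  have hCt : Tendsto (fun N => C * (μ (E N)ᶜ).toReal) atTop (𝓝 0) := by
    simpa using htend0.const_mul C
  obtain ⟨N, hN⟩ := (hCt.eventually (gt_mem_nhds hε)).exists
  exact absurd (hkey N) (not_le.mpr hN)

end SRB
end
end
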